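/- arXiv:1108.0293 — 13 statements merged into one kernel-verified Lean document; each statement's English description precedes it below -/
import Mathlib

section
/- In the presented group πₙ, for each j with 1 ≤ j ≤ n, the subgroup π̄ⱼ generated by {sⱼ, s_{j+1}, …, sₙ} is a normal subgroup of πₙ; moreover (with π̄_{n+1} = 1) each π̄_{j+1} is normal in π̄ⱼ and the quotient group π̄ⱼ/π̄_{j+1} is cyclic, generated by the image of sⱼ. In particular πₙ is supersolvable. -/
open FreeGroup

/-- The relator set for the fundamental group `πₙ` of the total space of an iterated
`S¹`-bundle of height `n`: for `i < j`,
`sᵢ sⱼ sᵢ⁻¹ = sₙ^{aⁿᵢⱼ} ⋯ s_{j+1}^{a^{j+1}ᵢⱼ} sⱼ^{εᵢⱼ}` (indices `0`-based). -/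
def iterRels (n : ℕ) (ε : Fin n → Fin n → ℤ) (a : Fin n → Fin n → Fin n → ℤ) :
    Set (FreeGroup (Fin n)) :=
  { r | ∃ i j : Fin n, i < j ∧
      r = of i * of j * (of i)⁻¹ *
        ((((List.finRange n).filter fun k => decide (j < k)).reverse.map
            fun k => of k ^ a i j k).prod * of j ^ ε i j)⁻¹ }

/-- The subgroup `π̄_{j+1}` of `πₙ` generated by `s_{j+1}, …, sₙ`
(`0`-based: generated by the `s_k` with `j ≤ k`). -/
def piBar (n : ℕ) (ε : Fin n → Fin n → ℤ) (a : Fin n → Fin n → Fin n → ℤ) (j : ℕ) :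
    Subgroup (PresentedGroup (iterRels n ε a)) :=
  Subgroup.closure { x | ∃ k : Fin n, j ≤ (k : ℕ) ∧ x = PresentedGroup.of k }

/-- A group is supersolvable if there is a finite series of subgroups, each normal in
the whole group, descending from the whole group to the trivial group, with each
successive quotient cyclic (i.e. each `c i` is generated modulo `c (i+1)` by a single
element). -/
def IsSupersolvable (G : Type*) [Group G] : Prop :=
  ∃ (m : ℕ) (c : ℕ → Subgroup G),
    c 0 = ⊤ ∧ c m = ⊥ ∧ (∀ i, c (i + 1) ≤ c i) ∧ (∀ i, (c i).Normal) ∧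
    ∀ i, ∃ g ∈ c i, ∀ x ∈ c i, ∃ k : ℤ, x * (g ^ k)⁻¹ ∈ c (i + 1)

/-! The relations say that conjugating `sₖ` by an earlier generator `sᵢ` gives `sₖ^{±1}` times a
word in the later generators. So conjugation by `sᵢ` maps `π̄ⱼ = ⟨sⱼ, …, sₙ⟩` into itself, and since
the exponent is a unit one can solve the relation for `sₖ`, which shows by downward induction on `j`
that it maps `π̄ⱼ` onto itself. Hence every generator normalizes every `π̄ⱼ`, and modulo the normal
subgroup `π̄_{j+1}` the group `π̄ⱼ` is generated by `sⱼ` alone. -/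

section TailSubgroup

variable {G : Type*} [Group G] {n : ℕ} (s : Fin n → G)

def tailSubgroup (j : ℕ) : Subgroup G :=
  Subgroup.closure { x | ∃ k : Fin n, j ≤ (k : ℕ) ∧ x = s k }

variable {s}

theorem mem_tailSubgroup {j : ℕ} {k : Fin n} (h : j ≤ (k : ℕ)) : s k ∈ tailSubgroup s j :=
  Subgroup.subset_closure ⟨k, h, rfl⟩

theorem tailSubgroup_antitone : Antitone (tailSubgroup s) :=
  fun _ _ h => Subgroup.closure_mono fun _ ⟨k, hk, hx⟩ => ⟨k, h.trans hk, hx⟩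

theorem tailSubgroup_eq_bot {j : ℕ} (h : n ≤ j) : tailSubgroup s j = ⊥ := by
  rw [tailSubgroup, Subgroup.closure_eq_bot_iff]
  rintro _ ⟨k, hk, -⟩
  omega

theorem tailSubgroup_zero (hs : Subgroup.closure (Set.range s) = ⊤) : tailSubgroup s 0 = ⊤ := by
  rw [← hs, tailSubgroup]
  congr
  ext x
  simp [eq_comm]

theorem tailSubgroup_eq_sup_zpowers (k : Fin n) :
    tailSubgroup s k = tailSubgroup s (k + 1) ⊔ Subgroup.zpowers (s k) := by
  rw [Subgroup.zpowers_eq_closure, tailSubgroup, tailSubgroup, ← Subgroup.closure_union]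
  congr 1
  ext x
  simp only [Set.mem_union, Set.mem_singleton_iff, Set.mem_ofPred_eq]
  constructor
  · rintro ⟨l, hl, rfl⟩
    rcases hl.lt_or_eq with hl | hl
    · exact .inl ⟨l, hl, rfl⟩
    · exact .inr (congrArg s (Fin.ext hl.symm))
  · rintro (⟨l, hl, rfl⟩ | rfl)
    exacts [⟨l, by omega, rfl⟩, ⟨k, le_rfl, rfl⟩]

theorem exists_mul_zpow_inv_mem_tailSubgroup_succ (k : Fin n)
    (hN : (tailSubgroup s (k + 1)).Normal) {x : G} (hx : x ∈ tailSubgroup s k) :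
    ∃ m : ℤ, x * (s k ^ m)⁻¹ ∈ tailSubgroup s (k + 1) := by
  rw [tailSubgroup_eq_sup_zpowers, Subgroup.mem_sup_of_normal_left (hs := hN)] at hx
  obtain ⟨y, hy, _, ⟨m, rfl⟩, rfl⟩ := hx
  exact ⟨m, by simpa using hy⟩

variable (s) in
def HasTriangularConjugation : Prop :=
  ∀ i k : Fin n, i < k →
    ∃ w ∈ tailSubgroup s (k + 1), ∃ e : ℤ, IsUnit e ∧ s i * s k * (s i)⁻¹ = w * s k ^ e

theorem map_conj_tailSubgroup_le (hrel : HasTriangularConjugation s) (i : Fin n) (j : ℕ) :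
    (tailSubgroup s j).map (MulAut.conj (s i)) ≤ tailSubgroup s j := by
  rw [Subgroup.map_le_iff_le_comap, tailSubgroup, Subgroup.closure_le]
  rintro _ ⟨k, hk, rfl⟩
  change s i * s k * (s i)⁻¹ ∈ tailSubgroup s j
  by_cases hji : j ≤ (i : ℕ)
  · exact mul_mem (mul_mem (mem_tailSubgroup hji) (mem_tailSubgroup hk))
      (inv_mem (mem_tailSubgroup hji))
  · obtain ⟨w, hw, e, -, hconj⟩ := hrel i k (by omega)
    rw [hconj]
    exact mul_mem (tailSubgroup_antitone (by omega) hw) (zpow_mem (mem_tailSubgroup hk) e)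

theorem le_map_conj_tailSubgroup (hrel : HasTriangularConjugation s) (i : Fin n) (j : ℕ) :
    tailSubgroup s j ≤ (tailSubgroup s j).map (MulAut.conj (s i)) := by
  induction j using Nat.strong_decreasing_induction with
  | base => exact ⟨n, fun m hm => by simp [tailSubgroup_eq_bot hm.le]⟩
  | step j ih =>
    refine (Subgroup.closure_le _).mpr ?_
    rintro _ ⟨k, hk, rfl⟩
    by_cases hji : j ≤ (i : ℕ)
    · refine ⟨(s i)⁻¹ * s k * s i, ?_, by simp [MulAut.conj_apply, mul_assoc]⟩
      exact mul_mem (mul_mem (inv_mem (mem_tailSubgroup hji)) (mem_tailSubgroup hk))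
        (mem_tailSubgroup hji)
    · obtain ⟨w, hw, e, he, hconj⟩ := hrel i k (by omega)
      have hw' : w ∈ (tailSubgroup s j).map (MulAut.conj (s i)) :=
        Subgroup.map_mono (tailSubgroup_antitone (by omega)) (ih (k + 1) (by omega) hw)
      have hconj' : s i * s k * (s i)⁻¹ ∈ (tailSubgroup s j).map (MulAut.conj (s i)) :=
        Subgroup.mem_map_of_mem _ (mem_tailSubgroup hk)
      have hsk : s k = (w⁻¹ * (s i * s k * (s i)⁻¹)) ^ e := by
        rw [hconj, inv_mul_cancel_left, ← zpow_mul, Int.isUnit_mul_self he, zpow_one]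
      rw [hsk]
      exact zpow_mem (mul_mem (inv_mem hw') hconj') e

theorem tailSubgroup_normal (hrel : HasTriangularConjugation s)
    (hs : Subgroup.closure (Set.range s) = ⊤) (j : ℕ) :
    (tailSubgroup s j).Normal := by
  rw [← Subgroup.normalizer_eq_top_iff, eq_top_iff, ← hs, Subgroup.closure_le]
  rintro _ ⟨i, rfl⟩
  exact Subgroup.mem_normalizer_iff_map_conj_eq.mpr
    ((map_conj_tailSubgroup_le hrel i j).antisymm (le_map_conj_tailSubgroup hrel i j))

theorem isSupersolvable_of_hasTriangularConjugation (hrel : HasTriangularConjugation s)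
    (hs : Subgroup.closure (Set.range s) = ⊤) :
    IsSupersolvable G := by
  refine ⟨n, tailSubgroup s, tailSubgroup_zero hs, tailSubgroup_eq_bot le_rfl,
    fun i => tailSubgroup_antitone i.le_succ, tailSubgroup_normal hrel hs, fun i => ?_⟩
  by_cases hi : i < n
  · exact ⟨s ⟨i, hi⟩, mem_tailSubgroup le_rfl, fun x hx =>
      exists_mul_zpow_inv_mem_tailSubgroup_succ ⟨i, hi⟩ (tailSubgroup_normal hrel hs _) hx⟩
  · refine ⟨1, one_mem _, fun x hx => ⟨0, ?_⟩⟩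
    rw [tailSubgroup_eq_bot (not_lt.mp hi), Subgroup.mem_bot] at hx
    simp [hx]

end TailSubgroup

theorem iterRels_hasTriangularConjugation {n : ℕ} {ε : Fin n → Fin n → ℤ}
    {a : Fin n → Fin n → Fin n → ℤ} (hε : ∀ i j : Fin n, i < j → ε i j = 1 ∨ ε i j = -1) :
    HasTriangularConjugation (PresentedGroup.of : Fin n → PresentedGroup (iterRels n ε a)) := by
  intro i k hik
  have hrel := PresentedGroup.mk_eq_mk_of_mul_inv_mem (rels := iterRels n ε a) ⟨i, k, hik, rfl⟩
  simp only [_root_.map_mul, _root_.map_inv, _root_.map_zpow, map_list_prod, List.map_map] at hrel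
  refine ⟨_, list_prod_mem fun x hx => ?_, ε i k, Int.isUnit_iff.mpr (hε i k hik), hrel⟩
  simp only [List.mem_map, List.mem_reverse, List.mem_filter, List.mem_finRange, true_and,
    decide_eq_true_eq] at hx
  obtain ⟨l, hl, rfl⟩ := hx
  exact zpow_mem (mem_tailSubgroup hl) _

theorem iterated_S1_bundle_pi1_supersolvable_general
    (n : ℕ) (ε : Fin n → Fin n → ℤ) (a : Fin n → Fin n → Fin n → ℤ)
    (hε : ∀ i j : Fin n, i < j → ε i j = 1 ∨ ε i j = -1) :
    (∀ j : ℕ, (piBar n ε a j).Normal) ∧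
    (∀ j : ℕ, piBar n ε a (j + 1) ≤ piBar n ε a j) ∧
    (∀ j : ℕ, ((piBar n ε a (j + 1)).subgroupOf (piBar n ε a j)).Normal) ∧
    (∀ j : Fin n, ∀ x ∈ piBar n ε a (j : ℕ), ∃ k : ℤ,
        x * ((PresentedGroup.of j : PresentedGroup (iterRels n ε a)) ^ k)⁻¹ ∈
          piBar n ε a ((j : ℕ) + 1)) ∧
    IsSupersolvable (PresentedGroup (iterRels n ε a)) := by
  have hs := PresentedGroup.closure_range_of (iterRels n ε a)
  have hrel := iterRels_hasTriangularConjugation (a := a) hε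
  have hnormal : ∀ j, (piBar n ε a j).Normal := tailSubgroup_normal hrel hs
  exact ⟨hnormal, fun j => tailSubgroup_antitone j.le_succ, fun j => (hnormal (j + 1)).subgroupOf _,
    fun j _ => exists_mul_zpow_inv_mem_tailSubgroup_succ j (hnormal _),
    isSupersolvable_of_hasTriangularConjugation hrel hs⟩

/-- In `πₙ`, each subgroup `π̄ⱼ = ⟨sⱼ, …, sₙ⟩` is normal in `πₙ`; moreover each
`π̄_{j+1}` is contained and normal in `π̄ⱼ`, and the quotient `π̄ⱼ/π̄_{j+1}` is cyclic,
generated by the image of `sⱼ`.  In particular `πₙ` is supersolvable. -/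
theorem iterated_S1_bundle_pi1_supersolvable
    (n : ℕ) (hn : 1 ≤ n) (ε : Fin n → Fin n → ℤ) (a : Fin n → Fin n → Fin n → ℤ)
    (hε : ∀ i j : Fin n, i < j → ε i j = 1 ∨ ε i j = -1) :
    (∀ j : ℕ, (piBar n ε a j).Normal) ∧
    (∀ j : ℕ, piBar n ε a (j + 1) ≤ piBar n ε a j) ∧
    (∀ j : ℕ, ((piBar n ε a (j + 1)).subgroupOf (piBar n ε a j)).Normal) ∧
    (∀ j : Fin n, ∀ x ∈ piBar n ε a (j : ℕ), ∃ k : ℤ,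
        x * ((PresentedGroup.of j : PresentedGroup (iterRels n ε a)) ^ k)⁻¹ ∈
          piBar n ε a ((j : ℕ) + 1)) ∧
    IsSupersolvable (PresentedGroup (iterRels n ε a)) :=
  iterated_S1_bundle_pi1_supersolvable_general n ε a hε
end

section
/- In the presented group πₙ, the subgroup Γₙ generated by {s₁², s₂², …, sₙ²} is a nilpotent group. Consequently, πₙ contains a nilpotent subgroup of finite index, i.e., πₙ is virtually nilpotent. -/
open FreeGroup

/-- The subgroup `Γₙ` of `πₙ` generated by the squares `s₁², …, sₙ²`. -/
def GammaN (n : ℕ) (ε : Fin n → Fin n → ℤ) (a : Fin n → Fin n → Fin n → ℤ) :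
    Subgroup (PresentedGroup (iterRels n ε a)) :=
  Subgroup.closure { x | ∃ i : Fin n, x = (PresentedGroup.of i : PresentedGroup (iterRels n ε a)) ^ 2 }

/-!
Let `N k` be the normal closure of the generators `sₘ` with (0-based) index `m ≥ k`, so that
`N 0 = πₙ` and `N n = 1`. Modulo `N (k + 1)` every generator conjugates `sₖ` to `sₖ^{±1}`; hence
the image of `N k` there is the normal cyclic group `⟨sₖ⟩`, and the squares of the generators
centralize it. So the normal closure `H` of the squares satisfies `⁅N k, H⁆ ≤ N (k + 1)`, which
makes `H`, and with it `Γₙ ≤ H`, nilpotent. In `πₙ ⧸ H` the same filtration has cyclic factors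
of order at most `2`, so `H` has index at most `2ⁿ`.
-/

open Subgroup

theorem Subgroup.isNilpotent_of_commutator_le_succ {G : Type*} [Group G] {H : Subgroup G}
    {N : ℕ → Subgroup G} {n : ℕ} (h0 : H ≤ N 0) (hstep : ∀ k < n, ⁅N k, H⁆ ≤ N (k + 1))
    (hn : N n = ⊥) : Group.IsNilpotent H := by
  have hseries : ∀ k ≤ n, H.lowerCentralSeries k ≤ N k := by
    intro k hk
    induction k with
    | zero => exact h0
    | succ k ih => exact (commutator_mono (ih (by omega)) le_rfl).trans (hstep k hk)
  exact (isNilpotent_iff_lowerCentralSeries H).mpr ⟨n, le_bot_iff.mp (hn ▸ hseries n le_rfl)⟩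

theorem Subgroup.mem_normalizer_zpowers_of_conj {G : Type*} [Group G] {g t : G}
    (h : g * t * g⁻¹ = t ∨ g * t * g⁻¹ = t⁻¹) :
    g ∈ normalizer (zpowers t : Set G) := by
  rw [mem_normalizer_iff_map_conj_eq, MonoidHom.map_zpowers]
  rcases h with h | h <;> simp [MulAut.conj_apply, h]

theorem Subgroup.sq_mem_centralizer_zpowers_of_conj {G : Type*} [Group G] {g t : G}
    (h : g * t * g⁻¹ = t ∨ g * t * g⁻¹ = t⁻¹) :
    g ^ 2 ∈ centralizer (zpowers t : Set G) := by
  have hconj : g ^ 2 * t * (g ^ 2)⁻¹ = t := by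
    rw [pow_two, mul_inv_rev,
      show g * g * t * (g⁻¹ * g⁻¹) = g * (g * t * g⁻¹) * g⁻¹ by group]
    rcases h with h | h <;> rw [h]
    · exact h
    · rw [← conj_inv, h, inv_inv]
  rw [zpowers_eq_closure, centralizer_closure, mem_centralizer_singleton_iff]
  exact mul_inv_eq_iff_eq_mul.mp hconj

namespace IteratedCircleBundle

variable {G : Type*} [Group G] {n : ℕ}

/-- For `s = PresentedGroup.of` in `πₙ`, the quotient by `tailNormalClosure s k` is `πₖ`. -/
def tailNormalClosure (s : Fin n → G) (k : ℕ) : Subgroup G :=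
  normalClosure (s '' {m | k ≤ (m : ℕ)})

instance (s : Fin n → G) (k : ℕ) : (tailNormalClosure s k).Normal := normalClosure_normal

theorem mem_tailNormalClosure (s : Fin n → G) {k : ℕ} {m : Fin n} (h : k ≤ m) :
    s m ∈ tailNormalClosure s k :=
  subset_normalClosure ⟨m, h, rfl⟩

theorem tailNormalClosure_eq_bot (s : Fin n → G) {k : ℕ} (hk : n ≤ k) :
    tailNormalClosure s k = ⊥ := by
  have : {m : Fin n | k ≤ (m : ℕ)} = ∅ := by ext m; simp; omega
  simp [tailNormalClosure, this]

theorem tailNormalClosure_zero {s : Fin n → G} (hs : closure (Set.range s) = ⊤) :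
    tailNormalClosure s 0 = ⊤ := by
  rw [eq_top_iff, ← hs]
  simpa [tailNormalClosure, Set.image_univ] using closure_le_normalClosure

theorem map_tailNormalClosure {G' : Type*} [Group G'] {f : G →* G'}
    (hf : Function.Surjective f) (s : Fin n → G) (k : ℕ) :
    (tailNormalClosure s k).map f = tailNormalClosure (f ∘ s) k := by
  rw [tailNormalClosure, map_normalClosure _ _ hf, ← Set.image_comp]
  rfl

theorem mk_eq_one_of_lt (s : Fin n → G) {j m : Fin n} (h : j < m) :
    (s m : G ⧸ tailNormalClosure s (j + 1)) = 1 :=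
  (QuotientGroup.eq_one_iff _).mpr (mem_tailNormalClosure s h)

def sqNormalClosure (s : Fin n → G) : Subgroup G :=
  normalClosure (Set.range fun i => s i ^ 2)

instance (s : Fin n → G) : (sqNormalClosure s).Normal := normalClosure_normal

/-- The relations of `πₙ` in a form that passes to quotients of `πₙ` (see `comp`). -/
structure IsGeneratingFamily (ε : Fin n → Fin n → ℤ) (s : Fin n → G) : Prop where
  closure_range : closure (Set.range s) = ⊤
  sign : ∀ i j : Fin n, i < j → ε i j = 1 ∨ ε i j = -1
  conj_mem : ∀ i j : Fin n, i < j →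
    s i * s j * (s i)⁻¹ * (s j ^ ε i j)⁻¹ ∈ tailNormalClosure s (j + 1)

variable {s : Fin n → G} {ε : Fin n → Fin n → ℤ}

namespace IsGeneratingFamily

theorem comp {G' : Type*} [Group G'] {f : G →* G'} (hf : Function.Surjective f)
    (h : IsGeneratingFamily ε s) : IsGeneratingFamily ε (f ∘ s) where
  closure_range := by
    rw [Set.range_comp, ← MonoidHom.map_closure, h.closure_range, map_top_of_surjective f hf]
  sign := h.sign
  conj_mem i j hij := by
    rw [← map_tailNormalClosure hf]
    simpa using mem_map_of_mem f (h.conj_mem i j hij)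

theorem conj_mk_eq_or (h : IsGeneratingFamily ε s) (i j : Fin n) :
    let q := QuotientGroup.mk' (tailNormalClosure s (j + 1))
    q (s i) * q (s j) * (q (s i))⁻¹ = q (s j) ∨
      q (s i) * q (s j) * (q (s i))⁻¹ = (q (s j))⁻¹ := by
  simp only [QuotientGroup.mk'_apply]
  rcases lt_trichotomy i j with hij | rfl | hji
  · have hconj : ((s i * s j * (s i)⁻¹ : G) : G ⧸ tailNormalClosure s (j + 1)) =
        (s j ^ ε i j : G) :=
      QuotientGroup.eq_iff_div_mem.mpr (by rw [div_eq_mul_inv]; exact h.conj_mem i j hij)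
    simp only [QuotientGroup.mk_mul, QuotientGroup.mk_inv, QuotientGroup.mk_zpow] at hconj
    rcases h.sign i j hij with he | he <;> simp [hconj, he]
  · simp
  · simp [mk_eq_one_of_lt s hji]

theorem normal_zpowers_mk (h : IsGeneratingFamily ε s) (j : Fin n) :
    (zpowers (QuotientGroup.mk' (tailNormalClosure s (j + 1)) (s j))).Normal := by
  rw [← normalizer_eq_top_iff, eq_top_iff,
    ← (h.comp (QuotientGroup.mk'_surjective _)).closure_range, closure_le]
  rintro _ ⟨i, rfl⟩
  exact mem_normalizer_zpowers_of_conj (h.conj_mk_eq_or i j)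

theorem map_tailNormalClosure_le_zpowers (h : IsGeneratingFamily ε s) (j : Fin n) :
    (tailNormalClosure s j).map (QuotientGroup.mk' (tailNormalClosure s (j + 1))) ≤
      zpowers (QuotientGroup.mk' (tailNormalClosure s (j + 1)) (s j)) := by
  have := h.normal_zpowers_mk j
  rw [map_tailNormalClosure (QuotientGroup.mk'_surjective _)]
  refine normalClosure_le_normal ?_
  rintro _ ⟨m, hm, rfl⟩
  rcases (show (j : ℕ) ≤ m from hm).eq_or_lt with hjm | hjm
  · rw [Fin.ext hjm]
    exact mem_zpowers _
  · simp [mk_eq_one_of_lt s (show j < m from hjm)]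

theorem map_sqNormalClosure_le_centralizer (h : IsGeneratingFamily ε s) (j : Fin n) :
    (sqNormalClosure s).map (QuotientGroup.mk' (tailNormalClosure s (j + 1))) ≤
      centralizer (zpowers (QuotientGroup.mk' (tailNormalClosure s (j + 1)) (s j))) := by
  have := h.normal_zpowers_mk j
  rw [sqNormalClosure, map_normalClosure _ _ (QuotientGroup.mk'_surjective _)]
  refine normalClosure_le_normal ?_
  rintro _ ⟨_, ⟨i, rfl⟩, rfl⟩
  rw [map_pow]
  exact sq_mem_centralizer_zpowers_of_conj (h.conj_mk_eq_or i j)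

theorem commutator_tailNormalClosure_sqNormalClosure_le (h : IsGeneratingFamily ε s)
    (j : Fin n) : ⁅tailNormalClosure s j, sqNormalClosure s⁆ ≤ tailNormalClosure s (j + 1) := by
  rw [← QuotientGroup.ker_mk' (tailNormalClosure s (j + 1)), ← Subgroup.map_eq_bot_iff,
    map_commutator, commutator_eq_bot_iff_le_centralizer]
  exact (h.map_tailNormalClosure_le_zpowers j).trans
    (le_centralizer_iff.mp (h.map_sqNormalClosure_le_centralizer j))

theorem isNilpotent_of_le_sqNormalClosure (h : IsGeneratingFamily ε s) {K : Subgroup G}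
    (hK : K ≤ sqNormalClosure s) : Group.IsNilpotent K :=
  isNilpotent_of_commutator_le_succ (N := tailNormalClosure s) (n := n)
    (tailNormalClosure_zero h.closure_range ▸ le_top)
    (fun k hk => (commutator_mono le_rfl hK).trans
      (h.commutator_tailNormalClosure_sqNormalClosure_le ⟨k, hk⟩))
    (tailNormalClosure_eq_bot s le_rfl)

theorem tailNormalClosure_le_zpowers_sup (h : IsGeneratingFamily ε s) (j : Fin n) :
    tailNormalClosure s j ≤ zpowers (s j) ⊔ tailNormalClosure s (j + 1) := by
  have hmap := h.map_tailNormalClosure_le_zpowers j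
  rwa [← MonoidHom.map_zpowers, map_le_iff_le_comap, comap_map_eq, QuotientGroup.ker_mk']
    at hmap

theorem finite_of_isOfFinOrder (h : IsGeneratingFamily ε s) (hfin : ∀ i, IsOfFinOrder (s i)) :
    Finite G := by
  have htail : ∀ k ≤ n, (tailNormalClosure s k : Set G).Finite := by
    intro k hk
    induction hk using Nat.decreasingInduction with
    | self => simp [tailNormalClosure_eq_bot s le_rfl]
    | of_succ k hk ih =>
      refine Set.Finite.subset ?_ (h.tailNormalClosure_le_zpowers_sup ⟨k, hk⟩)
      rw [mul_normal]
      exact (hfin ⟨k, hk⟩).finite_zpowers.mul ih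
  rw [← Set.finite_univ_iff, ← coe_top, ← tailNormalClosure_zero h.closure_range]
  exact htail 0 n.zero_le

theorem finite_quotient_sqNormalClosure (h : IsGeneratingFamily ε s) :
    Finite (G ⧸ sqNormalClosure s) := by
  have hq := QuotientGroup.mk'_surjective (sqNormalClosure s)
  refine (h.comp hq).finite_of_isOfFinOrder fun i =>
    isOfFinOrder_iff_pow_eq_one.mpr ⟨2, two_pos, ?_⟩
  rw [Function.comp_apply, ← map_pow]
  exact (QuotientGroup.eq_one_iff _).mpr (subset_normalClosure ⟨i, rfl⟩)

end IsGeneratingFamily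

theorem isGeneratingFamily_of {a : Fin n → Fin n → Fin n → ℤ}
    (hε : ∀ i j : Fin n, i < j → ε i j = 1 ∨ ε i j = -1) :
    IsGeneratingFamily ε (PresentedGroup.of : Fin n → PresentedGroup (iterRels n ε a)) where
  closure_range := PresentedGroup.closure_range_of _
  sign := hε
  conj_mem i j hij := by
    have hrel := PresentedGroup.mk_eq_mk_of_mul_inv_mem (rels := iterRels n ε a) ⟨i, j, hij, rfl⟩
    simp only [_root_.map_mul, _root_.map_inv, _root_.map_zpow] at hrel
    change PresentedGroup.of i * PresentedGroup.of j * (PresentedGroup.of i)⁻¹ =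
      _ * PresentedGroup.of j ^ ε i j at hrel
    rw [hrel, mul_inv_cancel_right, map_list_prod]
    refine list_prod_mem ?_
    simp only [List.map_map, List.mem_map, List.mem_reverse, List.mem_filter,
      List.mem_finRange, true_and, decide_eq_true_eq]
    rintro _ ⟨k, hjk, rfl⟩
    rw [Function.comp_apply, _root_.map_zpow]
    exact zpow_mem (mem_tailNormalClosure _ hjk) _

end IteratedCircleBundle

open IteratedCircleBundle

theorem GammaN_nilpotent_and_virtually_nilpotent_general
    (n : ℕ) (ε : Fin n → Fin n → ℤ) (a : Fin n → Fin n → Fin n → ℤ)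
    (hε : ∀ i j : Fin n, i < j → ε i j = 1 ∨ ε i j = -1) :
    Group.IsNilpotent ↥(GammaN n ε a) ∧
    ∃ H : Subgroup (PresentedGroup (iterRels n ε a)), H.FiniteIndex ∧ Group.IsNilpotent ↥H := by
  have h := isGeneratingFamily_of (a := a) hε
  have hΓ : GammaN n ε a ≤ sqNormalClosure PresentedGroup.of :=
    (closure_le _).mpr fun _ ⟨i, hi⟩ => hi ▸ subset_normalClosure ⟨i, rfl⟩
  have := h.finite_quotient_sqNormalClosure
  exact ⟨h.isNilpotent_of_le_sqNormalClosure hΓ, sqNormalClosure PresentedGroup.of,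
    finiteIndex_of_finite_quotient, h.isNilpotent_of_le_sqNormalClosure le_rfl⟩

/-- `Γₙ = ⟨s₁², …, sₙ²⟩` is a nilpotent group; consequently `πₙ` contains a nilpotent
subgroup of finite index, i.e. `πₙ` is virtually nilpotent. -/
theorem GammaN_nilpotent_and_virtually_nilpotent
    (n : ℕ) (hn : 1 ≤ n) (ε : Fin n → Fin n → ℤ) (a : Fin n → Fin n → Fin n → ℤ)
    (hε : ∀ i j : Fin n, i < j → ε i j = 1 ∨ ε i j = -1) :
    Group.IsNilpotent ↥(GammaN n ε a) ∧
    ∃ H : Subgroup (PresentedGroup (iterRels n ε a)), H.FiniteIndex ∧ Group.IsNilpotent ↥H :=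
  GammaN_nilpotent_and_virtually_nilpotent_general n ε a hε
end

section
/- Let G be a group, let a be an integer, let ε, ε₁, ε₂ ∈ {1, −1}, and let t₁, t₂, t₃ ∈ G satisfy t₁t₂t₁⁻¹ = t₃^a t₂^ε, t₁t₃t₁⁻¹ = t₃^{ε₁}, and t₂t₃t₂⁻¹ = t₃^{ε₂}. Then t₁²t₂² = t₃^{(ε+ε₁)(ε₂+1)a} t₂²t₁². -/
/-- If `t₁t₂t₁⁻¹ = t₃^a t₂^ε`, `t₁t₃t₁⁻¹ = t₃^{ε₁}` and `t₂t₃t₂⁻¹ = t₃^{ε₂}` with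
`ε, ε₁, ε₂ ∈ {1, −1}`, then `t₁²t₂² = t₃^{(ε+ε₁)(ε₂+1)a} t₂²t₁²`. -/
theorem sq_mul_sq_eq_zpow_mul (G : Type*) [Group G] (a ε ε₁ ε₂ : ℤ)
    (hε : ε = 1 ∨ ε = -1) (hε₁ : ε₁ = 1 ∨ ε₁ = -1) (hε₂ : ε₂ = 1 ∨ ε₂ = -1)
    (t₁ t₂ t₃ : G)
    (h1 : t₁ * t₂ * t₁⁻¹ = t₃ ^ a * t₂ ^ ε)
    (h2 : t₁ * t₃ * t₁⁻¹ = t₃ ^ ε₁)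
    (h3 : t₂ * t₃ * t₂⁻¹ = t₃ ^ ε₂) :
    t₁ ^ 2 * t₂ ^ 2 = t₃ ^ ((ε + ε₁) * (ε₂ + 1) * a) * (t₂ ^ 2 * t₁ ^ 2) := by
  have hε₂sq : ε₂ * ε₂ = 1 := by rcases hε₂ with h | h <;> subst h <;> norm_num
  -- conjugation of powers of t₃ by t₁ and t₂
  have k2 : ∀ n : ℤ, t₁ * t₃ ^ n * t₁⁻¹ = t₃ ^ (ε₁ * n) := by
    intro n; rw [← conj_zpow, h2, ← zpow_mul]
  have k3 : ∀ n : ℤ, t₂ * t₃ ^ n * t₂⁻¹ = t₃ ^ (ε₂ * n) := by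
    intro n; rw [← conj_zpow, h3, ← zpow_mul]
  have k3' : ∀ n : ℤ, t₂⁻¹ * t₃ ^ n * t₂ = t₃ ^ (ε₂ * n) := by
    intro n
    have h := k3 (ε₂ * n)
    rw [show ε₂ * (ε₂ * n) = n by rw [← mul_assoc, hε₂sq, one_mul]] at h
    rw [← h]; group
  -- moving t₃-powers past t₂^ε
  have hc : ∀ n : ℤ, t₂ ^ ε * t₃ ^ n = t₃ ^ (ε₂ * n) * t₂ ^ ε := by
    intro n
    rcases hε with h | h <;> subst h
    · rw [zpow_one, ← k3 n]; group
    · rw [zpow_neg_one, ← k3' n]; group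
  -- moving t₃-powers past t₂^2
  have hc2 : ∀ n : ℤ, t₂ ^ (2 : ℕ) * t₃ ^ n = t₃ ^ n * t₂ ^ (2 : ℕ) := by
    intro n
    have h1' := k3 n
    have h2' := k3 (ε₂ * n)
    rw [show ε₂ * (ε₂ * n) = n by rw [← mul_assoc, hε₂sq, one_mul]] at h2'
    calc t₂ ^ (2:ℕ) * t₃ ^ n = t₂ * (t₂ * t₃ ^ n * t₂⁻¹) * t₂ := by
            rw [pow_two]; group
      _ = t₂ * t₃ ^ (ε₂ * n) * t₂ := by rw [h1']
      _ = (t₂ * t₃ ^ (ε₂ * n) * t₂⁻¹) * t₂ ^ (2:ℕ) := by rw [pow_two]; group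
      _ = t₃ ^ n * t₂ ^ (2:ℕ) := by rw [h2']
  -- step A : conjugate t₂² by t₁
  have A : t₁ * t₂ ^ (2 : ℕ) * t₁⁻¹ = t₃ ^ ((1 + ε₂) * a) * t₂ ^ (2 * ε) := by
    calc t₁ * t₂ ^ (2:ℕ) * t₁⁻¹ = (t₁ * t₂ * t₁⁻¹) * (t₁ * t₂ * t₁⁻¹) := by
            rw [pow_two]; group
      _ = t₃ ^ a * (t₂ ^ ε * t₃ ^ a) * t₂ ^ ε := by rw [h1]; group
      _ = t₃ ^ a * (t₃ ^ (ε₂ * a) * t₂ ^ ε) * t₂ ^ ε := by rw [hc]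
      _ = t₃ ^ (a + ε₂ * a) * t₂ ^ (ε + ε) := by rw [zpow_add, zpow_add]; group
      _ = t₃ ^ ((1 + ε₂) * a) * t₂ ^ (2 * ε) := by
            rw [show a + ε₂ * a = (1 + ε₂) * a by ring, show ε + ε = 2 * ε by ring]
  -- step B : conjugate again by t₁
  have B : t₁ ^ (2:ℕ) * t₂ ^ (2:ℕ) * (t₁⁻¹ * t₁⁻¹) =
      t₃ ^ ((ε + ε₁) * (ε₂ + 1) * a) * t₂ ^ (2:ℕ) := by
    have step : t₁ ^ (2:ℕ) * t₂ ^ (2:ℕ) * (t₁⁻¹ * t₁⁻¹) =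
        t₃ ^ (ε₁ * ((1 + ε₂) * a)) * (t₁ * t₂ ^ (2 * ε) * t₁⁻¹) := by
      calc t₁ ^ (2:ℕ) * t₂ ^ (2:ℕ) * (t₁⁻¹ * t₁⁻¹)
          = t₁ * (t₁ * t₂ ^ (2:ℕ) * t₁⁻¹) * t₁⁻¹ := by rw [pow_two]; group
        _ = t₁ * (t₃ ^ ((1 + ε₂) * a) * t₂ ^ (2 * ε)) * t₁⁻¹ := by rw [A]
        _ = (t₁ * t₃ ^ ((1 + ε₂) * a) * t₁⁻¹) * (t₁ * t₂ ^ (2 * ε) * t₁⁻¹) := by group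
        _ = t₃ ^ (ε₁ * ((1 + ε₂) * a)) * (t₁ * t₂ ^ (2 * ε) * t₁⁻¹) := by rw [k2]
    rw [step]
    rcases hε with h | h <;> subst h
    · -- ε = 1
      have e : t₂ ^ ((2:ℤ) * 1) = t₂ ^ (2:ℕ) := by
        rw [mul_one, zpow_two, pow_two]
      rw [e] at A ⊢
      rw [A, ← mul_assoc, ← zpow_add,
        show ε₁ * ((1 + ε₂) * a) + (1 + ε₂) * a = (1 + ε₁) * (ε₂ + 1) * a by ring]
    · -- ε = -1
      have e : t₂ ^ ((2:ℤ) * (-1)) = (t₂ ^ (2:ℕ))⁻¹ := by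
        rw [show (2:ℤ) * (-1) = -2 by ring, zpow_neg, zpow_two, pow_two]
      rw [e] at A ⊢
      have e2 : t₁ * (t₂ ^ (2:ℕ))⁻¹ * t₁⁻¹ = (t₁ * t₂ ^ (2:ℕ) * t₁⁻¹)⁻¹ := by group
      rw [e2, A, mul_inv_rev, inv_inv, ← zpow_neg, ← mul_assoc,
        mul_assoc _ (t₂ ^ (2:ℕ)), hc2, ← mul_assoc, ← zpow_add,
        show ε₁ * ((1 + ε₂) * a) + -((1 + ε₂) * a) = (-1 + ε₁) * (ε₂ + 1) * a by ring]
  -- conclude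
  calc t₁ ^ 2 * t₂ ^ 2 = (t₁ ^ (2:ℕ) * t₂ ^ (2:ℕ) * (t₁⁻¹ * t₁⁻¹)) * t₁ ^ 2 := by
        rw [pow_two t₁]; group
    _ = (t₃ ^ ((ε + ε₁) * (ε₂ + 1) * a) * t₂ ^ (2:ℕ)) * t₁ ^ 2 := by rw [B]
    _ = t₃ ^ ((ε + ε₁) * (ε₂ + 1) * a) * (t₂ ^ 2 * t₁ ^ 2) := by group
end

section
/- Let a be an integer and ε, ε₁, ε₂ ∈ {1, −1} with (ε+ε₁)(ε₂+1)a = 0. Then in the group Π(a, ε, ε₁, ε₂), the subgroup generated by the images of s₁², s₂² and s₃² is commutative (abelian). -/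
/-- The relator set of the presentation
`⟨s₁, s₂, s₃ ∣ s₁s₂s₁⁻¹ = s₃^a s₂^ε, s₁s₃s₁⁻¹ = s₃^{ε₁}, s₂s₃s₂⁻¹ = s₃^{ε₂}⟩`. -/
def PiRels (a ε ε₁ ε₂ : ℤ) : Set (FreeGroup (Fin 3)) :=
  { FreeGroup.of 0 * FreeGroup.of 1 * (FreeGroup.of 0)⁻¹ * FreeGroup.of 1 ^ (-ε) *
      FreeGroup.of 2 ^ (-a),
    FreeGroup.of 0 * FreeGroup.of 2 * (FreeGroup.of 0)⁻¹ * FreeGroup.of 2 ^ (-ε₁),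
    FreeGroup.of 1 * FreeGroup.of 2 * (FreeGroup.of 1)⁻¹ * FreeGroup.of 2 ^ (-ε₂) }

/-- The group `Π(a, ε, ε₁, ε₂)` with presentation
`⟨s₁, s₂, s₃ ∣ s₁s₂s₁⁻¹ = s₃^a s₂^ε, s₁s₃s₁⁻¹ = s₃^{ε₁}, s₂s₃s₂⁻¹ = s₃^{ε₂}⟩`. -/
abbrev PiGroup (a ε ε₁ ε₂ : ℤ) : Type := PresentedGroup (PiRels a ε ε₁ ε₂)

private lemma conj_zpow' {G : Type*} [Group G] (x y : G) (n : ℤ) :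
    x * y ^ n * x⁻¹ = (x * y * x⁻¹) ^ n := by
  rw [← MulAut.conj_apply, map_zpow, MulAut.conj_apply]

private lemma conj_inv_eq {G : Type*} [Group G] {x y : G} {e : ℤ}
    (he : e * e = 1) (hc : x * y * x⁻¹ = y ^ e) : x⁻¹ * y * x = y ^ e := by
  have h1 : x⁻¹ * y ^ e * x = y := by
    rw [← hc]; group
  calc x⁻¹ * y * x = x⁻¹ * (y ^ e) ^ e * x := by rw [← zpow_mul, he, zpow_one]
    _ = (x⁻¹ * y ^ e * x) ^ e := by have h2 := conj_zpow' x⁻¹ (y ^ e) e; rwa [inv_inv] at h2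
    _ = y ^ e := by rw [h1]

private lemma sq_comm' {G : Type*} [Group G] {x y : G} {e : ℤ}
    (he : e * e = 1) (hc : x * y * x⁻¹ = y ^ e) :
    x ^ (2:ℤ) * y ^ (2:ℤ) = y ^ (2:ℤ) * x ^ (2:ℤ) := by
  have h2 : x * y ^ (2:ℤ) * x⁻¹ = y ^ (2 * e) := by
    rw [conj_zpow', hc, ← zpow_mul, mul_comm e 2]
  have h4 : x ^ (2:ℤ) * y ^ (2:ℤ) * (x ^ (2:ℤ))⁻¹ = y ^ (2:ℤ) := by
    calc x ^ (2:ℤ) * y ^ (2:ℤ) * (x ^ (2:ℤ))⁻¹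
        = x * (x * y ^ (2:ℤ) * x⁻¹) * x⁻¹ := by rw [zpow_two x]; group
      _ = x * y ^ (2 * e) * x⁻¹ := by rw [h2]
      _ = (x * y * x⁻¹) ^ (2 * e) := conj_zpow' x y (2 * e)
      _ = y ^ (e * (2 * e)) := by rw [hc, ← zpow_mul]
      _ = y ^ (2:ℤ) := by rw [show e * (2 * e) = 2 * (e * e) by ring, he, mul_one]
  calc x ^ (2:ℤ) * y ^ (2:ℤ)
      = (x ^ (2:ℤ) * y ^ (2:ℤ) * (x ^ (2:ℤ))⁻¹) * x ^ (2:ℤ) := by group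
    _ = y ^ (2:ℤ) * x ^ (2:ℤ) := by rw [h4]

/-- If `(ε+ε₁)(ε₂+1)a = 0`, then in `Π(a, ε, ε₁, ε₂)` the subgroup generated by the
images of `s₁²`, `s₂²`, `s₃²` is commutative. -/
theorem PiGroup_squares_commutative (a ε ε₁ ε₂ : ℤ)
    (hε : ε = 1 ∨ ε = -1) (hε₁ : ε₁ = 1 ∨ ε₁ = -1) (hε₂ : ε₂ = 1 ∨ ε₂ = -1)
    (h : (ε + ε₁) * (ε₂ + 1) * a = 0) :
    ∀ x ∈ Subgroup.closure
        ({(PresentedGroup.of 0 : PiGroup a ε ε₁ ε₂) ^ 2,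
          (PresentedGroup.of 1 : PiGroup a ε ε₁ ε₂) ^ 2,
          (PresentedGroup.of 2 : PiGroup a ε ε₁ ε₂) ^ 2} : Set (PiGroup a ε ε₁ ε₂)),
      ∀ y ∈ Subgroup.closure
        ({(PresentedGroup.of 0 : PiGroup a ε ε₁ ε₂) ^ 2,
          (PresentedGroup.of 1 : PiGroup a ε ε₁ ε₂) ^ 2,
          (PresentedGroup.of 2 : PiGroup a ε ε₁ ε₂) ^ 2} : Set (PiGroup a ε ε₁ ε₂)),
        x * y = y * x := by
  have he : ε * ε = 1 := by rcases hε with rfl | rfl <;> norm_num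
  have he1 : ε₁ * ε₁ = 1 := by rcases hε₁ with rfl | rfl <;> norm_num
  have he2 : ε₂ * ε₂ = 1 := by rcases hε₂ with rfl | rfl <;> norm_num
  set A : PiGroup a ε ε₁ ε₂ := PresentedGroup.of 0 with hAdef
  set B : PiGroup a ε ε₁ ε₂ := PresentedGroup.of 1 with hBdef
  set C : PiGroup a ε ε₁ ε₂ := PresentedGroup.of 2 with hCdef
  have hof : ∀ i : Fin 3,
      PresentedGroup.mk (PiRels a ε ε₁ ε₂) (FreeGroup.of i) = PresentedGroup.of i :=
    fun _ => rfl
  have mk_rel : ∀ r ∈ PiRels a ε ε₁ ε₂,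
      (PresentedGroup.mk (PiRels a ε ε₁ ε₂) r : PiGroup a ε ε₁ ε₂) = 1 := fun r hr =>
    (QuotientGroup.eq_one_iff r).mpr (Subgroup.subset_normalClosure hr)
  have rel1 : A * B * A⁻¹ = C ^ a * B ^ ε := by
    have h0 := mk_rel _ (show _ ∈ PiRels a ε ε₁ ε₂ from Or.inl rfl)
    simp only [map_mul, map_inv, map_zpow, hof, ← hAdef, ← hBdef, ← hCdef] at h0
    calc A * B * A⁻¹
        = (A * B * A⁻¹ * B ^ (-ε) * C ^ (-a)) * (C ^ a * B ^ ε) := by group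
      _ = 1 * (C ^ a * B ^ ε) := by rw [h0]
      _ = C ^ a * B ^ ε := one_mul _
  have rel2 : A * C * A⁻¹ = C ^ ε₁ := by
    have h0 := mk_rel _ (show _ ∈ PiRels a ε ε₁ ε₂ from Or.inr (Or.inl rfl))
    simp only [map_mul, map_inv, map_zpow, hof, ← hAdef, ← hBdef, ← hCdef] at h0
    calc A * C * A⁻¹ = (A * C * A⁻¹ * C ^ (-ε₁)) * C ^ ε₁ := by group
      _ = 1 * C ^ ε₁ := by rw [h0]
      _ = C ^ ε₁ := one_mul _
  have rel3 : B * C * B⁻¹ = C ^ ε₂ := by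
    have h0 := mk_rel _ (show _ ∈ PiRels a ε ε₁ ε₂ from Or.inr (Or.inr rfl))
    simp only [map_mul, map_inv, map_zpow, hof, ← hAdef, ← hBdef, ← hCdef] at h0
    calc B * C * B⁻¹ = (B * C * B⁻¹ * C ^ (-ε₂)) * C ^ ε₂ := by group
      _ = 1 * C ^ ε₂ := by rw [h0]
      _ = C ^ ε₂ := one_mul _
  -- B^2 commutes with C
  have hBC : Commute (B ^ (2:ℤ)) C := by
    have : B ^ (2:ℤ) * C * (B ^ (2:ℤ))⁻¹ = C := by
      calc B ^ (2:ℤ) * C * (B ^ (2:ℤ))⁻¹ = B * (B * C * B⁻¹) * B⁻¹ := by rw [zpow_two B]; group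
        _ = B * C ^ ε₂ * B⁻¹ := by rw [rel3]
        _ = (B * C * B⁻¹) ^ ε₂ := conj_zpow' B C ε₂
        _ = C ^ (ε₂ * ε₂) := by rw [rel3, ← zpow_mul]
        _ = C := by rw [he2, zpow_one]
    have hcm : B ^ (2:ℤ) * C = C * B ^ (2:ℤ) := by
      calc B ^ (2:ℤ) * C = (B ^ (2:ℤ) * C * (B ^ (2:ℤ))⁻¹) * B ^ (2:ℤ) := by group
        _ = C * B ^ (2:ℤ) := by rw [this]
    exact hcm
  -- B^ε conjugation of C
  have hεconj : B ^ ε * C * (B ^ ε)⁻¹ = C ^ ε₂ := by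
    rcases hε with rfl | rfl
    · simpa using rel3
    · have := conj_inv_eq he2 rel3
      simpa [zpow_neg, zpow_one] using this
  set c : ℤ := a * (1 + ε₂) with hcdef
  have hconjB2 : A * B ^ (2:ℤ) * A⁻¹ = C ^ c * B ^ (2 * ε) := by
    have hBCa : B ^ ε * C ^ a * (B ^ ε)⁻¹ = C ^ (ε₂ * a) := by
      rw [conj_zpow', hεconj, ← zpow_mul]
    calc A * B ^ (2:ℤ) * A⁻¹ = (A * B * A⁻¹) ^ (2:ℤ) := conj_zpow' A B 2
      _ = (C ^ a * B ^ ε) ^ (2:ℤ) := by rw [rel1]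
      _ = C ^ a * (B ^ ε * C ^ a * (B ^ ε)⁻¹) * (B ^ ε * B ^ ε) := by rw [zpow_two (C ^ a * B ^ ε)]; group
      _ = C ^ a * C ^ (ε₂ * a) * (B ^ ε * B ^ ε) := by rw [hBCa]
      _ = C ^ (a + ε₂ * a) * B ^ (ε + ε) := by rw [← zpow_add, ← zpow_add]
      _ = C ^ c * B ^ (2 * ε) := by rw [show a + ε₂ * a = c by rw [hcdef]; ring, show ε + ε = 2 * ε by ring]
  have hconjB2ε : A * B ^ (2 * ε) * A⁻¹ = C ^ (c * ε) * B ^ (2:ℤ) := by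
    have hcomm : Commute (C ^ c) ((B ^ (2:ℤ)) ^ ε) := (hBC.symm.zpow_left c).zpow_right ε
    calc A * B ^ (2 * ε) * A⁻¹ = A * (B ^ (2:ℤ)) ^ ε * A⁻¹ := by rw [← zpow_mul]
      _ = (A * B ^ (2:ℤ) * A⁻¹) ^ ε := conj_zpow' A (B ^ (2:ℤ)) ε
      _ = (C ^ c * (B ^ (2:ℤ)) ^ ε) ^ ε := by rw [hconjB2, ← zpow_mul]
      _ = (C ^ c) ^ ε * ((B ^ (2:ℤ)) ^ ε) ^ ε := hcomm.mul_zpow ε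
      _ = C ^ (c * ε) * B ^ (2:ℤ) := by rw [← zpow_mul, ← zpow_mul, ← zpow_mul, mul_assoc, he, mul_one]
  have hconjCc : A * C ^ c * A⁻¹ = C ^ (ε₁ * c) := by
    rw [conj_zpow', rel2, ← zpow_mul]
  have hcexp : c * ε₁ + c * ε = 0 := by
    have : c * ε₁ + c * ε = (ε + ε₁) * (ε₂ + 1) * a := by rw [hcdef]; ring
    rw [this, h]
  have c01 : A ^ (2:ℤ) * B ^ (2:ℤ) = B ^ (2:ℤ) * A ^ (2:ℤ) := by
    have key : A ^ (2:ℤ) * B ^ (2:ℤ) * (A ^ (2:ℤ))⁻¹ = B ^ (2:ℤ) := by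
      calc A ^ (2:ℤ) * B ^ (2:ℤ) * (A ^ (2:ℤ))⁻¹
          = A * (A * B ^ (2:ℤ) * A⁻¹) * A⁻¹ := by rw [zpow_two A]; group
        _ = A * (C ^ c * B ^ (2 * ε)) * A⁻¹ := by rw [hconjB2]
        _ = (A * C ^ c * A⁻¹) * (A * B ^ (2 * ε) * A⁻¹) := by group
        _ = C ^ (ε₁ * c) * (C ^ (c * ε) * B ^ (2:ℤ)) := by rw [hconjCc, hconjB2ε]
        _ = C ^ (ε₁ * c + c * ε) * B ^ (2:ℤ) := by rw [← mul_assoc, ← zpow_add]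
        _ = B ^ (2:ℤ) := by rw [show ε₁ * c + c * ε = c * ε₁ + c * ε by ring, hcexp,
              zpow_zero, one_mul]
    calc A ^ (2:ℤ) * B ^ (2:ℤ)
        = (A ^ (2:ℤ) * B ^ (2:ℤ) * (A ^ (2:ℤ))⁻¹) * A ^ (2:ℤ) := by group
      _ = B ^ (2:ℤ) * A ^ (2:ℤ) := by rw [key]
  have c02 : A ^ (2:ℤ) * C ^ (2:ℤ) = C ^ (2:ℤ) * A ^ (2:ℤ) := sq_comm' he1 rel2
  have c12 : B ^ (2:ℤ) * C ^ (2:ℤ) = C ^ (2:ℤ) * B ^ (2:ℤ) := sq_comm' he2 rel3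
  -- all pairs in the generating set commute
  have hpairs : ∀ u ∈ ({A ^ 2, B ^ 2, C ^ 2} : Set (PiGroup a ε ε₁ ε₂)),
      ∀ v ∈ ({A ^ 2, B ^ 2, C ^ 2} : Set (PiGroup a ε ε₁ ε₂)), u * v = v * u := by
    have pA : (A : PiGroup a ε ε₁ ε₂) ^ 2 = A ^ (2:ℤ) := by rw [pow_two, ← zpow_two]
    have pB : (B : PiGroup a ε ε₁ ε₂) ^ 2 = B ^ (2:ℤ) := by rw [pow_two, ← zpow_two]
    have pC : (C : PiGroup a ε ε₁ ε₂) ^ 2 = C ^ (2:ℤ) := by rw [pow_two, ← zpow_two]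
    rintro u (rfl | rfl | rfl) v (rfl | rfl | rfl) <;>
      simp only [pA, pB, pC] <;>
      first
        | rfl
        | exact c01 | exact c01.symm
        | exact c02 | exact c02.symm
        | exact c12 | exact c12.symm
  intro x hx y hy
  refine Subgroup.closure_induction₂
    (p := fun x y _ _ => x * y = y * x)
    (fun u v hu hv => hpairs u hu v hv)
    (fun _ _ => by simp) (fun _ _ => by simp)
    (fun u v w _ _ _ h1 h2 => Commute.mul_left h1 h2)
    (fun v w u _ _ _ h1 h2 => Commute.mul_right h1 h2)
    (fun u v _ _ h1 => (Commute.inv_left h1))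
    (fun u v _ _ h1 => (Commute.inv_right h1))
    hx hy
end

section
/- Let G be a group, let a be an integer, let ε, ε₁, ε₂ ∈ {1, −1}, and let t₁, t₂, t₃ ∈ G satisfy t₁t₂t₁⁻¹ = t₃^a t₂^ε, t₁t₃t₁⁻¹ = t₃^{ε₁}, and t₂t₃t₂⁻¹ = t₃^{ε₂}. Assume t₃ has infinite order. Then t₁² and t₂² commute if and only if (ε+ε₁)(ε₂+1)a = 0. -/
/-!
Conjugation by `t₁` and `t₂` preserves `⟨t₃⟩`, and `t₂²` centralises it. Writing
`b = (ε₂ + 1) a`, one computes `t₁ t₂² t₁⁻¹ = t₃^b t₂^{2ε}` and then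
`t₁² t₂² t₁⁻² = t₃^{(ε + ε₁) b} t₂²`. So `t₁²` and `t₂²` commute iff `t₃^{(ε + ε₁) b} = 1`,
i.e. iff `(ε + ε₁) b = 0` as `t₃` has infinite order.
-/

section ConjPower

variable {G : Type*} [Group G] {g x : G} {e : ℤ}

theorem conj_zpow_of_conj_eq (h : g * x * g⁻¹ = x ^ e) (k : ℤ) :
    g * x ^ k * g⁻¹ = x ^ (e * k) := by
  rw [← conj_zpow, h, ← zpow_mul]

theorem inv_conj_of_conj_eq (h : g * x * g⁻¹ = x ^ e) (he : e * e = 1) :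
    g⁻¹ * x * g⁻¹⁻¹ = x ^ e := by
  have hx : g * x ^ e * g⁻¹ = x := by rw [conj_zpow_of_conj_eq h, he, zpow_one]
  calc g⁻¹ * x * g⁻¹⁻¹ = g⁻¹ * (g * x ^ e * g⁻¹) * g := by rw [hx, inv_inv]
    _ = x ^ e := by group

theorem zpow_conj_of_conj_eq (h : g * x * g⁻¹ = x ^ e) (he : e * e = 1) {n : ℤ}
    (hn : n = 1 ∨ n = -1) : g ^ n * x * (g ^ n)⁻¹ = x ^ e := by
  rcases hn with rfl | rfl
  · rwa [zpow_one]
  · rw [zpow_neg_one]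
    exact inv_conj_of_conj_eq h he

theorem commute_sq_of_conj_eq (h : g * x * g⁻¹ = x ^ e) (he : e * e = 1) :
    Commute (g ^ 2) x := by
  have hsq : g ^ 2 * x * (g ^ 2)⁻¹ = x :=
    calc g ^ 2 * x * (g ^ 2)⁻¹
        = g * (g * x * g⁻¹) * g⁻¹ := by simp only [pow_two, mul_inv_rev, mul_assoc]
      _ = x := by rw [h, conj_zpow_of_conj_eq h, he, zpow_one]
  exact mul_inv_eq_iff_eq_mul.mp hsq

end ConjPower

section Relations

variable {G : Type*} [Group G] {t₁ t₂ t₃ : G} {a ε ε₁ ε₂ : ℤ}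

theorem conj_sq_eq (hε : ε = 1 ∨ ε = -1) (hε₂ : ε₂ * ε₂ = 1)
    (h1 : t₁ * t₂ * t₁⁻¹ = t₃ ^ a * t₂ ^ ε) (h3 : t₂ * t₃ * t₂⁻¹ = t₃ ^ ε₂) :
    t₁ * t₂ ^ 2 * t₁⁻¹ = t₃ ^ ((ε₂ + 1) * a) * t₂ ^ (2 * ε) := by
  have hconj : t₂ ^ ε * t₃ ^ a * (t₂ ^ ε)⁻¹ = t₃ ^ (ε₂ * a) :=
    conj_zpow_of_conj_eq (zpow_conj_of_conj_eq h3 hε₂ hε) a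
  calc t₁ * t₂ ^ 2 * t₁⁻¹ = (t₃ ^ a * t₂ ^ ε) ^ 2 := by rw [← h1, conj_pow]
    _ = t₃ ^ a * (t₂ ^ ε * t₃ ^ a * (t₂ ^ ε)⁻¹) * t₂ ^ (ε + ε) := by
      rw [pow_two, zpow_add]; group
    _ = t₃ ^ ((ε₂ + 1) * a) * t₂ ^ (2 * ε) := by
      rw [hconj, ← zpow_add, two_mul, add_mul, add_comm (ε₂ * a), one_mul]

theorem sq_conj_sq_eq (hε : ε = 1 ∨ ε = -1) (hε₂ : ε₂ * ε₂ = 1)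
    (h1 : t₁ * t₂ * t₁⁻¹ = t₃ ^ a * t₂ ^ ε) (h2 : t₁ * t₃ * t₁⁻¹ = t₃ ^ ε₁)
    (h3 : t₂ * t₃ * t₂⁻¹ = t₃ ^ ε₂) :
    t₁ ^ 2 * t₂ ^ 2 * (t₁ ^ 2)⁻¹ = t₃ ^ ((ε + ε₁) * (ε₂ + 1) * a) * t₂ ^ 2 := by
  have hsq := conj_sq_eq hε hε₂ h1 h3
  set b := (ε₂ + 1) * a
  have hcomm : Commute (t₂ ^ 2) (t₃ ^ b) := (commute_sq_of_conj_eq h3 hε₂).zpow_right b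
  have hpow : (t₃ ^ b * t₂ ^ (2 * ε)) ^ ε = t₃ ^ (ε * b) * t₂ ^ 2 := by
    rcases hε with rfl | rfl
    · simp
    · rw [zpow_neg_one, mul_inv_rev, ← zpow_neg, mul_neg_one, neg_neg, zpow_ofNat, neg_one_mul,
        zpow_neg]
      exact hcomm.inv_right.eq
  calc t₁ ^ 2 * t₂ ^ 2 * (t₁ ^ 2)⁻¹
        = t₁ * (t₁ * t₂ ^ 2 * t₁⁻¹) * t₁⁻¹ := by simp only [pow_two t₁, mul_inv_rev, mul_assoc]
    _ = (t₁ * t₃ ^ b * t₁⁻¹) * (t₁ * (t₂ ^ 2) ^ ε * t₁⁻¹) := by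
      rw [hsq, zpow_mul t₂, zpow_ofNat]
      simp only [mul_assoc, inv_mul_cancel_left]
    _ = t₃ ^ (ε₁ * b) * (t₃ ^ b * t₂ ^ (2 * ε)) ^ ε := by
      rw [conj_zpow_of_conj_eq h2, ← conj_zpow, hsq]
    _ = t₃ ^ ((ε + ε₁) * (ε₂ + 1) * a) * t₂ ^ 2 := by
      rw [hpow, ← mul_assoc, ← zpow_add, ← add_mul, add_comm ε₁, mul_assoc (ε + ε₁)]

end Relations

theorem sq_commute_iff_general (G : Type*) [Group G] (a ε ε₁ ε₂ : ℤ)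
    (hε : ε = 1 ∨ ε = -1) (hε₂ : ε₂ = 1 ∨ ε₂ = -1)
    (t₁ t₂ t₃ : G)
    (h1 : t₁ * t₂ * t₁⁻¹ = t₃ ^ a * t₂ ^ ε)
    (h2 : t₁ * t₃ * t₁⁻¹ = t₃ ^ ε₁)
    (h3 : t₂ * t₃ * t₂⁻¹ = t₃ ^ ε₂)
    (ht₃ : ¬ IsOfFinOrder t₃) :
    t₁ ^ 2 * t₂ ^ 2 = t₂ ^ 2 * t₁ ^ 2 ↔ (ε + ε₁) * (ε₂ + 1) * a = 0 := by
  have hε₂sq : ε₂ * ε₂ = 1 := by rcases hε₂ with rfl | rfl <;> rfl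
  have hinj := injective_zpow_iff_not_isOfFinOrder.mpr ht₃
  rw [← mul_inv_eq_iff_eq_mul, sq_conj_sq_eq hε hε₂sq h1 h2 h3, mul_eq_right,
    hinj.eq_iff' (zpow_zero t₃)]

/-- If `t₁t₂t₁⁻¹ = t₃^a t₂^ε`, `t₁t₃t₁⁻¹ = t₃^{ε₁}`, `t₂t₃t₂⁻¹ = t₃^{ε₂}` with
`ε, ε₁, ε₂ ∈ {1, −1}` and `t₃` of infinite order, then `t₁²` and `t₂²` commute
iff `(ε+ε₁)(ε₂+1)a = 0`. -/
theorem sq_commute_iff (G : Type*) [Group G] (a ε ε₁ ε₂ : ℤ)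
    (hε : ε = 1 ∨ ε = -1) (hε₁ : ε₁ = 1 ∨ ε₁ = -1) (hε₂ : ε₂ = 1 ∨ ε₂ = -1)
    (t₁ t₂ t₃ : G)
    (h1 : t₁ * t₂ * t₁⁻¹ = t₃ ^ a * t₂ ^ ε)
    (h2 : t₁ * t₃ * t₁⁻¹ = t₃ ^ ε₁)
    (h3 : t₂ * t₃ * t₂⁻¹ = t₃ ^ ε₂)
    (ht₃ : ¬ IsOfFinOrder t₃) :
    t₁ ^ 2 * t₂ ^ 2 = t₂ ^ 2 * t₁ ^ 2 ↔ (ε + ε₁) * (ε₂ + 1) * a = 0 :=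
  sq_commute_iff_general G a ε ε₁ ε₂ hε hε₂ t₁ t₂ t₃ h1 h2 h3 ht₃
end

section
/- Let a be an integer and ε, ε₁, ε₂ ∈ {1, −1}, and suppose (ε, ε₁, ε₂) ≠ (1,1,1) and (ε, ε₁, ε₂) ≠ (−1,−1,1). If a is even, then Π(a, ε, ε₁, ε₂) is isomorphic to Π(0, ε, ε₁, ε₂); if a is odd, then Π(a, ε, ε₁, ε₂) is isomorphic to Π(1, ε, ε₁, ε₂). -/
section GroupCalc
variable {G : Type*} [Group G]

private lemma swap_zpow {X Z : G} {e : ℤ} (h : X * Z * X⁻¹ = Z ^ e) (m : ℤ) :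
    X * Z ^ m = Z ^ (e * m) * X := by
  have h1 : X * Z ^ m * X⁻¹ = Z ^ (e * m) := by
    rw [zpow_mul, ← h, conj_zpow]
  rw [← h1]; group

private lemma swap_zpow_inv {X Z : G} {e : ℤ} (h : X * Z * X⁻¹ = Z ^ e) (he : e * e = 1)
    (m : ℤ) : X⁻¹ * Z ^ m = Z ^ (e * m) * X⁻¹ := by
  have h2 : X * Z ^ (e * m) = Z ^ m * X := by
    rw [swap_zpow h, show e * (e * m) = m by rw [← mul_assoc, he, one_mul]]
  calc X⁻¹ * Z ^ m = X⁻¹ * (Z ^ m * X) * X⁻¹ := by group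
    _ = X⁻¹ * (X * Z ^ (e * m)) * X⁻¹ := by rw [h2]
    _ = Z ^ (e * m) * X⁻¹ := by group

private lemma key2 (X Z : G) (p e : ℤ) (r2 : X * Z * X⁻¹ = Z ^ e) :
    (Z ^ p * X) * Z * (Z ^ p * X)⁻¹ * Z ^ (-e) = 1 := by
  calc (Z ^ p * X) * Z * (Z ^ p * X)⁻¹ * Z ^ (-e)
      = Z ^ p * (X * Z ^ (1:ℤ)) * (X⁻¹ * (Z ^ (-p) * Z ^ (-e))) := by group
    _ = Z ^ p * (Z ^ (e * 1) * X) * (X⁻¹ * (Z ^ (-p) * Z ^ (-e))) := by rw [swap_zpow r2 1]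
    _ = 1 := by group

private lemma key1pos (X Y Z : G) (a b p q e₁ e₂ : ℤ)
    (r1 : X * Y * X⁻¹ = Z ^ b * Y) (r2 : X * Z * X⁻¹ = Z ^ e₁) (r3 : Y * Z * Y⁻¹ = Z ^ e₂)
    (hb : p + e₁ * q + b + e₂ * (-p) + -q + -a = 0) :
    (Z ^ p * X) * (Z ^ q * Y) * (Z ^ p * X)⁻¹ * (Z ^ q * Y) ^ (-(1:ℤ)) * Z ^ (-a) = 1 := by
  calc (Z ^ p * X) * (Z ^ q * Y) * (Z ^ p * X)⁻¹ * (Z ^ q * Y) ^ (-(1:ℤ)) * Z ^ (-a)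
      = Z ^ p * (X * Z ^ q) * (Y * X⁻¹ * (Z ^ (-p) * (Y⁻¹ * (Z ^ (-q) * Z ^ (-a))))) := by
        group
    _ = Z ^ p * (Z ^ (e₁ * q) * X) *
          (Y * X⁻¹ * (Z ^ (-p) * (Y⁻¹ * (Z ^ (-q) * Z ^ (-a))))) := by rw [swap_zpow r2 q]
    _ = (Z ^ p * Z ^ (e₁ * q)) * (X * Y * X⁻¹) *
          (Z ^ (-p) * (Y⁻¹ * (Z ^ (-q) * Z ^ (-a)))) := by group
    _ = (Z ^ p * Z ^ (e₁ * q)) * (Z ^ b * Y) *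
          (Z ^ (-p) * (Y⁻¹ * (Z ^ (-q) * Z ^ (-a)))) := by rw [r1]
    _ = (Z ^ p * Z ^ (e₁ * q) * Z ^ b) * (Y * Z ^ (-p)) *
          (Y⁻¹ * (Z ^ (-q) * Z ^ (-a))) := by group
    _ = (Z ^ p * Z ^ (e₁ * q) * Z ^ b) * (Z ^ (e₂ * (-p)) * Y) *
          (Y⁻¹ * (Z ^ (-q) * Z ^ (-a))) := by rw [swap_zpow r3 (-p)]
    _ = Z ^ (p + e₁ * q + b + e₂ * (-p) + -q + -a) := by group
    _ = 1 := by rw [hb, zpow_zero]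

private lemma key1neg (X Y Z : G) (a b p q e₁ e₂ : ℤ) (he₂ : e₂ * e₂ = 1)
    (r1 : X * Y * X⁻¹ = Z ^ b * Y⁻¹) (r2 : X * Z * X⁻¹ = Z ^ e₁) (r3 : Y * Z * Y⁻¹ = Z ^ e₂)
    (hb : p + e₁ * q + b + e₂ * (-p + q) + -a = 0) :
    (Z ^ p * X) * (Z ^ q * Y) * (Z ^ p * X)⁻¹ * (Z ^ q * Y) ^ (-(-1:ℤ)) * Z ^ (-a) = 1 := by
  calc (Z ^ p * X) * (Z ^ q * Y) * (Z ^ p * X)⁻¹ * (Z ^ q * Y) ^ (-(-1:ℤ)) * Z ^ (-a)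
      = Z ^ p * (X * Z ^ q) * (Y * X⁻¹ * (Z ^ (-p + q) * (Y * Z ^ (-a)))) := by group
    _ = Z ^ p * (Z ^ (e₁ * q) * X) *
          (Y * X⁻¹ * (Z ^ (-p + q) * (Y * Z ^ (-a)))) := by rw [swap_zpow r2 q]
    _ = (Z ^ p * Z ^ (e₁ * q)) * (X * Y * X⁻¹) *
          (Z ^ (-p + q) * (Y * Z ^ (-a))) := by group
    _ = (Z ^ p * Z ^ (e₁ * q)) * (Z ^ b * Y⁻¹) *
          (Z ^ (-p + q) * (Y * Z ^ (-a))) := by rw [r1]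
    _ = (Z ^ p * Z ^ (e₁ * q) * Z ^ b) * (Y⁻¹ * Z ^ (-p + q)) * (Y * Z ^ (-a)) := by group
    _ = (Z ^ p * Z ^ (e₁ * q) * Z ^ b) * (Z ^ (e₂ * (-p + q)) * Y⁻¹) * (Y * Z ^ (-a)) := by
        rw [swap_zpow_inv r3 he₂ (-p + q)]
    _ = Z ^ (p + e₁ * q + b + e₂ * (-p + q) + -a) := by group
    _ = 1 := by rw [hb, zpow_zero]

end GroupCalc

private lemma relator_eq_one {α : Type*} {rels : Set (FreeGroup α)} {r : FreeGroup α}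
    (hr : r ∈ rels) : PresentedGroup.mk rels r = 1 :=
  (QuotientGroup.eq_one_iff r).mpr (Subgroup.subset_normalClosure hr)

section Rels
variable (b e e₁ e₂ : ℤ)

private lemma PG_r1 :
    (PresentedGroup.of 0 : PiGroup b e e₁ e₂) * .of 1 * (.of 0)⁻¹ =
      (PresentedGroup.of 2) ^ b * (PresentedGroup.of 1) ^ e := by
  have h := relator_eq_one (show _ ∈ PiRels b e e₁ e₂ from Set.mem_insert _ _)
  simp only [map_mul, map_inv, map_zpow] at h
  refine mul_inv_eq_one.mp ?_
  calc (PresentedGroup.of 0 : PiGroup b e e₁ e₂) * .of 1 * (.of 0)⁻¹ *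
        ((PresentedGroup.of 2) ^ b * (PresentedGroup.of 1) ^ e)⁻¹
      = (PresentedGroup.of 0 : PiGroup b e e₁ e₂) * .of 1 * (.of 0)⁻¹ *
        (PresentedGroup.of 1) ^ (-e) * (PresentedGroup.of 2) ^ (-b) := by group
    _ = 1 := h

private lemma PG_r2 :
    (PresentedGroup.of 0 : PiGroup b e e₁ e₂) * .of 2 * (.of 0)⁻¹ =
      (PresentedGroup.of 2) ^ e₁ := by
  have h := relator_eq_one
    (show _ ∈ PiRels b e e₁ e₂ from Set.mem_insert_of_mem _ (Set.mem_insert _ _))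
  simp only [map_mul, map_inv, map_zpow] at h
  refine mul_inv_eq_one.mp ?_
  calc (PresentedGroup.of 0 : PiGroup b e e₁ e₂) * .of 2 * (.of 0)⁻¹ *
        ((PresentedGroup.of 2) ^ e₁)⁻¹
      = (PresentedGroup.of 0 : PiGroup b e e₁ e₂) * .of 2 * (.of 0)⁻¹ *
        (PresentedGroup.of 2) ^ (-e₁) := by group
    _ = 1 := h

private lemma PG_r3 :
    (PresentedGroup.of 1 : PiGroup b e e₁ e₂) * .of 2 * (.of 1)⁻¹ =
      (PresentedGroup.of 2) ^ e₂ := by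
  have h := relator_eq_one
    (show _ ∈ PiRels b e e₁ e₂ from
      Set.mem_insert_of_mem _ (Set.mem_insert_of_mem _ rfl))
  simp only [map_mul, map_inv, map_zpow] at h
  refine mul_inv_eq_one.mp ?_
  calc (PresentedGroup.of 1 : PiGroup b e e₁ e₂) * .of 2 * (.of 1)⁻¹ *
        ((PresentedGroup.of 2) ^ e₂)⁻¹
      = (PresentedGroup.of 1 : PiGroup b e e₁ e₂) * .of 2 * (.of 1)⁻¹ *
        (PresentedGroup.of 2) ^ (-e₂) := by group
    _ = 1 := h

end Rels

private def genMap {G : Type*} [Group G] (A B C : G) : Fin 3 → G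
  | 0 => A
  | 1 => B
  | 2 => C

@[simp] private lemma genMap_zero {G : Type*} [Group G] (A B C : G) : genMap A B C 0 = A := rfl
@[simp] private lemma genMap_one {G : Type*} [Group G] (A B C : G) : genMap A B C 1 = B := rfl
@[simp] private lemma genMap_two {G : Type*} [Group G] (A B C : G) : genMap A B C 2 = C := rfl

private def piFun (a b e e₁ e₂ p q : ℤ) : Fin 3 → PiGroup b e e₁ e₂ :=
  genMap ((PresentedGroup.of 2) ^ p * .of 0) ((PresentedGroup.of 2) ^ q * .of 1)
    (PresentedGroup.of 2)

private lemma lifted (a b e e₁ e₂ p q : ℤ) (he₁ : e₁ * e₁ = 1) (he₂ : e₂ * e₂ = 1)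
    (hb : (e = 1 ∧ b = a + (1 - e₁) * q + (e₂ - 1) * p) ∨
          (e = -1 ∧ b = a - (1 - e₂) * p - (e₁ + e₂) * q)) :
    ∀ r ∈ PiRels a e e₁ e₂, FreeGroup.lift (piFun a b e e₁ e₂ p q) r = 1 := by
  intro r hr
  have r1 := PG_r1 b e e₁ e₂
  have r2 := PG_r2 b e e₁ e₂
  have r3 := PG_r3 b e e₁ e₂
  simp only [PiRels, Set.mem_insert_iff, Set.mem_singleton_iff] at hr
  rcases hr with rfl | rfl | rfl
  · rcases hb with ⟨rfl, hb⟩ | ⟨rfl, hb⟩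
    · rw [zpow_one] at r1
      simp only [map_mul, map_inv, map_zpow, FreeGroup.lift_apply_of, piFun, genMap_zero,
        genMap_one, genMap_two]
      exact key1pos _ _ _ a b p q e₁ e₂ r1 r2 r3 (by linear_combination hb)
    · rw [zpow_neg_one] at r1
      simp only [map_mul, map_inv, map_zpow, FreeGroup.lift_apply_of, piFun, genMap_zero,
        genMap_one, genMap_two]
      exact key1neg _ _ _ a b p q e₁ e₂ he₂ r1 r2 r3 (by linear_combination hb)
  · simp only [map_mul, map_inv, map_zpow, FreeGroup.lift_apply_of, piFun, genMap_zero,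
      genMap_one, genMap_two]
    exact key2 _ _ p e₁ r2
  · simp only [map_mul, map_inv, map_zpow, FreeGroup.lift_apply_of, piFun, genMap_zero,
      genMap_one, genMap_two]
    exact key2 _ _ q e₂ r3

private lemma pi_iso (a b e e₁ e₂ p q : ℤ) (he₁ : e₁ * e₁ = 1) (he₂ : e₂ * e₂ = 1)
    (hb : (e = 1 ∧ b = a + (1 - e₁) * q + (e₂ - 1) * p) ∨
          (e = -1 ∧ b = a - (1 - e₂) * p - (e₁ + e₂) * q)) :
    Nonempty (PiGroup a e e₁ e₂ ≃* PiGroup b e e₁ e₂) := by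
  have hb' : (e = 1 ∧ a = b + (1 - e₁) * (-q) + (e₂ - 1) * (-p)) ∨
      (e = -1 ∧ a = b - (1 - e₂) * (-p) - (e₁ + e₂) * (-q)) := by
    rcases hb with ⟨h, hb⟩ | ⟨h, hb⟩
    · exact Or.inl ⟨h, by linear_combination -hb⟩
    · exact Or.inr ⟨h, by linear_combination -hb⟩
  let φ : PiGroup a e e₁ e₂ →* PiGroup b e e₁ e₂ :=
    PresentedGroup.toGroup (lifted a b e e₁ e₂ p q he₁ he₂ hb)
  let ψ : PiGroup b e e₁ e₂ →* PiGroup a e e₁ e₂ :=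
    PresentedGroup.toGroup (lifted b a e e₁ e₂ (-p) (-q) he₁ he₂ hb')
  refine ⟨MonoidHom.toMulEquiv φ ψ ?_ ?_⟩
  · refine PresentedGroup.ext fun i => ?_
    fin_cases i
    · show (ψ.comp φ) (.of 0) = MonoidHom.id _ (.of 0)
      simp only [MonoidHom.comp_apply, MonoidHom.id_apply, φ, ψ, PresentedGroup.toGroup.of,
        piFun, genMap_zero, genMap_one, genMap_two, map_mul, map_zpow]
      group
    · show (ψ.comp φ) (.of 1) = MonoidHom.id _ (.of 1)
      simp only [MonoidHom.comp_apply, MonoidHom.id_apply, φ, ψ, PresentedGroup.toGroup.of,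
        piFun, genMap_zero, genMap_one, genMap_two, map_mul, map_zpow]
      group
    · show (ψ.comp φ) (.of 2) = MonoidHom.id _ (.of 2)
      simp only [MonoidHom.comp_apply, MonoidHom.id_apply, φ, ψ, PresentedGroup.toGroup.of,
        piFun, genMap_zero, genMap_one, genMap_two, map_mul, map_zpow]
  · refine PresentedGroup.ext fun i => ?_
    fin_cases i
    · show (φ.comp ψ) (.of 0) = MonoidHom.id _ (.of 0)
      simp only [MonoidHom.comp_apply, MonoidHom.id_apply, φ, ψ, PresentedGroup.toGroup.of,
        piFun, genMap_zero, genMap_one, genMap_two, map_mul, map_zpow]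
      group
    · show (φ.comp ψ) (.of 1) = MonoidHom.id _ (.of 1)
      simp only [MonoidHom.comp_apply, MonoidHom.id_apply, φ, ψ, PresentedGroup.toGroup.of,
        piFun, genMap_zero, genMap_one, genMap_two, map_mul, map_zpow]
      group
    · show (φ.comp ψ) (.of 2) = MonoidHom.id _ (.of 2)
      simp only [MonoidHom.comp_apply, MonoidHom.id_apply, φ, ψ, PresentedGroup.toGroup.of,
        piFun, genMap_zero, genMap_one, genMap_two, map_mul, map_zpow]

/-- Unless `(ε, ε₁, ε₂) = (1,1,1)` or `(−1,−1,1)`, the group `Π(a, ε, ε₁, ε₂)` is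
isomorphic to `Π(0, ε, ε₁, ε₂)` when `a` is even and to `Π(1, ε, ε₁, ε₂)` when `a`
is odd. -/
theorem PiGroup_iso_of_parity (a ε ε₁ ε₂ : ℤ)
    (hε : ε = 1 ∨ ε = -1) (hε₁ : ε₁ = 1 ∨ ε₁ = -1) (hε₂ : ε₂ = 1 ∨ ε₂ = -1)
    (h1 : ¬ (ε = 1 ∧ ε₁ = 1 ∧ ε₂ = 1)) (h2 : ¬ (ε = -1 ∧ ε₁ = -1 ∧ ε₂ = 1)) :
    (Even a → Nonempty (PiGroup a ε ε₁ ε₂ ≃* PiGroup 0 ε ε₁ ε₂)) ∧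
    (Odd a → Nonempty (PiGroup a ε ε₁ ε₂ ≃* PiGroup 1 ε ε₁ ε₂)) := by
  constructor
  · rintro ⟨m, hm⟩
    rcases hε with rfl | rfl <;> rcases hε₁ with rfl | rfl <;> rcases hε₂ with rfl | rfl
    · exact absurd ⟨rfl, rfl, rfl⟩ h1
    · exact pi_iso a 0 1 1 (-1) m 0 (by norm_num) (by norm_num) (Or.inl ⟨rfl, by omega⟩)
    · exact pi_iso a 0 1 (-1) 1 0 (-m) (by norm_num) (by norm_num) (Or.inl ⟨rfl, by omega⟩)
    · exact pi_iso a 0 1 (-1) (-1) 0 (-m) (by norm_num) (by norm_num) (Or.inl ⟨rfl, by omega⟩)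
    · exact pi_iso a 0 (-1) 1 1 0 m (by norm_num) (by norm_num) (Or.inr ⟨rfl, by omega⟩)
    · exact pi_iso a 0 (-1) 1 (-1) m 0 (by norm_num) (by norm_num) (Or.inr ⟨rfl, by omega⟩)
    · exact absurd ⟨rfl, rfl, rfl⟩ h2
    · exact pi_iso a 0 (-1) (-1) (-1) m 0 (by norm_num) (by norm_num) (Or.inr ⟨rfl, by omega⟩)
  · rintro ⟨m, hm⟩
    rcases hε with rfl | rfl <;> rcases hε₁ with rfl | rfl <;> rcases hε₂ with rfl | rfl
    · exact absurd ⟨rfl, rfl, rfl⟩ h1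
    · exact pi_iso a 1 1 1 (-1) m 0 (by norm_num) (by norm_num) (Or.inl ⟨rfl, by omega⟩)
    · exact pi_iso a 1 1 (-1) 1 0 (-m) (by norm_num) (by norm_num) (Or.inl ⟨rfl, by omega⟩)
    · exact pi_iso a 1 1 (-1) (-1) 0 (-m) (by norm_num) (by norm_num) (Or.inl ⟨rfl, by omega⟩)
    · exact pi_iso a 1 (-1) 1 1 0 m (by norm_num) (by norm_num) (Or.inr ⟨rfl, by omega⟩)
    · exact pi_iso a 1 (-1) 1 (-1) m 0 (by norm_num) (by norm_num) (Or.inr ⟨rfl, by omega⟩)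
    · exact absurd ⟨rfl, rfl, rfl⟩ h2
    · exact pi_iso a 1 (-1) (-1) (-1) m 0 (by norm_num) (by norm_num) (Or.inr ⟨rfl, by omega⟩)
end

section
/- For every integer a and all signs ε, ε₁, ε₂ ∈ {1, −1}, the group Π(a, ε, ε₁, ε₂) is isomorphic to Π(−a, ε, ε₁, ε₂). -/
/-! The substitution `s₃ ↦ s₃⁻¹` turns the defining relations of `Π(a, ε, ε₁, ε₂)` into those
of `Π(−a, ε, ε₁, ε₂)`: conjugation commutes with inversion, so `s₃⁻¹` is conjugated to
`(s₃⁻¹)^{ε_i}` exactly as `s₃` is to `s₃^{ε_i}`, while `s₃^a = (s₃⁻¹)^{−a}`. It therefore induces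
mutually inverse homomorphisms between the two groups. -/

namespace PiGroup

open PresentedGroup

variable {G : Type*} [Group G] {a b ε ε₁ ε₂ : ℤ}

def SatisfiesRels (a ε ε₁ ε₂ : ℤ) (s : Fin 3 → G) : Prop :=
  s 0 * s 1 * (s 0)⁻¹ = s 2 ^ a * s 1 ^ ε ∧
    s 0 * s 2 * (s 0)⁻¹ = s 2 ^ ε₁ ∧ s 1 * s 2 * (s 1)⁻¹ = s 2 ^ ε₂

theorem satisfiesRels_iff_forall_lift_eq_one (s : Fin 3 → G) :
    SatisfiesRels a ε ε₁ ε₂ s ↔ ∀ r ∈ PiRels a ε ε₁ ε₂, FreeGroup.lift s r = 1 := by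
  simp only [SatisfiesRels, PiRels, Set.mem_insert_iff, Set.mem_singleton_iff, forall_eq_or_imp,
    forall_eq, map_mul, map_inv, map_zpow, FreeGroup.lift_apply_of, zpow_neg,
    mul_inv_eq_iff_eq_mul, one_mul]

theorem satisfiesRels_of : SatisfiesRels a ε ε₁ ε₂ (of : Fin 3 → PiGroup a ε ε₁ ε₂) := by
  rw [satisfiesRels_iff_forall_lift_eq_one]
  intro r hr
  rw [← FreeGroup.lift_unique (f := of) (mk _) fun _ ↦ rfl]
  exact one_of_mem hr

theorem SatisfiesRels.inv_s₃ {s : Fin 3 → G} (h : SatisfiesRels a ε ε₁ ε₂ s) :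
    SatisfiesRels (-a) ε ε₁ ε₂ ![s 0, s 1, (s 2)⁻¹] := by
  obtain ⟨h₁, h₂, h₃⟩ := h
  refine ⟨?_, ?_, ?_⟩ <;>
    simp only [Matrix.cons_val_zero, Matrix.cons_val_one, Matrix.cons_val_two, Matrix.head_cons,
      Matrix.tail_cons, inv_zpow', neg_neg]
  · exact h₁
  · rw [zpow_neg, ← h₂]; group
  · rw [zpow_neg, ← h₃]; group

def lift (s : Fin 3 → G) (h : SatisfiesRels a ε ε₁ ε₂ s) : PiGroup a ε ε₁ ε₂ →* G :=
  toGroup ((satisfiesRels_iff_forall_lift_eq_one s).1 h)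

@[simp]
theorem lift_of (s : Fin 3 → G) (h : SatisfiesRels a ε ε₁ ε₂ s) (i : Fin 3) :
    lift s h (of i) = s i :=
  toGroup.of _

/-- Taking `a = -b` as a hypothesis, rather than `-a` as the target parameter, lets this map be
composed with its reverse without meeting `-(-a)`, which is not definitionally `a`. -/
def invS₃Hom (hab : a = -b) : PiGroup a ε ε₁ ε₂ →* PiGroup b ε ε₁ ε₂ :=
  lift ![of 0, of 1, (of 2)⁻¹] (hab ▸ satisfiesRels_of.inv_s₃)

theorem invS₃Hom_comp_invS₃Hom (hab : a = -b) (hba : b = -a) :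
    (invS₃Hom hba).comp (invS₃Hom hab) = MonoidHom.id (PiGroup a ε ε₁ ε₂) :=
  PresentedGroup.ext fun i ↦ by fin_cases i <;> simp [invS₃Hom]

def invS₃Equiv (hab : a = -b) : PiGroup a ε ε₁ ε₂ ≃* PiGroup b ε ε₁ ε₂ :=
  have hba : b = -a := by omega
  (invS₃Hom hab).toMulEquiv (invS₃Hom hba) (invS₃Hom_comp_invS₃Hom hab hba)
    (invS₃Hom_comp_invS₃Hom hba hab)

end PiGroup

theorem PiGroup_iso_neg_general (a ε ε₁ ε₂ : ℤ) :
    Nonempty (PiGroup a ε ε₁ ε₂ ≃* PiGroup (-a) ε ε₁ ε₂) :=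
  ⟨PiGroup.invS₃Equiv (neg_neg a).symm⟩

/-- `Π(a, ε, ε₁, ε₂) ≅ Π(−a, ε, ε₁, ε₂)`. -/
theorem PiGroup_iso_neg (a ε ε₁ ε₂ : ℤ)
    (hε : ε = 1 ∨ ε = -1) (hε₁ : ε₁ = 1 ∨ ε₁ = -1) (hε₂ : ε₂ = 1 ∨ ε₂ = -1) :
    Nonempty (PiGroup a ε ε₁ ε₂ ≃* PiGroup (-a) ε ε₁ ε₂) :=
  PiGroup_iso_neg_general a ε ε₁ ε₂
end

section
/- For every integer a and all signs ε, ε₁, ε₂ ∈ {1, −1}, the group Π(a, ε, ε₁, ε₂) is isomorphic to Π(a, ε, ε₁ε₂, ε₂). -/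
namespace PiAux

lemma conj_zpow' {G : Type*} [Group G] (g x : G) (n : ℤ) :
    g * x ^ n * g⁻¹ = (g * x * g⁻¹) ^ n := by
  rw [show g * x * g⁻¹ = (MulAut.conj g) x from rfl, ← map_zpow]; rfl

lemma rel_mk {rels : Set (FreeGroup (Fin 3))} {r} (h : r ∈ rels) :
    PresentedGroup.mk rels r = 1 :=
  (QuotientGroup.eq_one_iff r).2 (Subgroup.subset_normalClosure h)

variable {a ε ε₁ ε₂ : ℤ}

lemma rel1 : (PresentedGroup.of 0 : PiGroup a ε ε₁ ε₂) * .of 1 * (.of 0)⁻¹ =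
    (PresentedGroup.of 2) ^ a * (PresentedGroup.of 1) ^ ε := by
  have := rel_mk (rels := PiRels a ε ε₁ ε₂) (r := FreeGroup.of 0 * FreeGroup.of 1 *
    (FreeGroup.of 0)⁻¹ * FreeGroup.of 1 ^ (-ε) * FreeGroup.of 2 ^ (-a)) (by left; rfl)
  simp only [map_mul, map_inv, map_zpow] at this
  have h : (PresentedGroup.of 0 : PiGroup a ε ε₁ ε₂) * .of 1 * (.of 0)⁻¹ *
      (PresentedGroup.of 1) ^ (-ε) * (PresentedGroup.of 2) ^ (-a) = 1 := this
  calc (PresentedGroup.of 0 : PiGroup a ε ε₁ ε₂) * .of 1 * (.of 0)⁻¹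
      = ((PresentedGroup.of 0 : PiGroup a ε ε₁ ε₂) * .of 1 * (.of 0)⁻¹ *
        (PresentedGroup.of 1) ^ (-ε) * (PresentedGroup.of 2) ^ (-a)) *
        ((PresentedGroup.of 2) ^ a * (PresentedGroup.of 1) ^ ε) := by group
    _ = 1 * ((PresentedGroup.of 2) ^ a * (PresentedGroup.of 1) ^ ε) := by rw [h]
    _ = _ := one_mul _

lemma rel2 : (PresentedGroup.of 0 : PiGroup a ε ε₁ ε₂) * .of 2 * (.of 0)⁻¹ =
    (PresentedGroup.of 2) ^ ε₁ := by
  have := rel_mk (rels := PiRels a ε ε₁ ε₂) (r := FreeGroup.of 0 * FreeGroup.of 2 *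
    (FreeGroup.of 0)⁻¹ * FreeGroup.of 2 ^ (-ε₁)) (by right; left; rfl)
  simp only [map_mul, map_inv, map_zpow] at this
  have h : (PresentedGroup.of 0 : PiGroup a ε ε₁ ε₂) * .of 2 * (.of 0)⁻¹ *
      (PresentedGroup.of 2) ^ (-ε₁) = 1 := this
  calc (PresentedGroup.of 0 : PiGroup a ε ε₁ ε₂) * .of 2 * (.of 0)⁻¹
      = ((PresentedGroup.of 0 : PiGroup a ε ε₁ ε₂) * .of 2 * (.of 0)⁻¹ *
        (PresentedGroup.of 2) ^ (-ε₁)) * (PresentedGroup.of 2) ^ ε₁ := by group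
    _ = 1 * (PresentedGroup.of 2) ^ ε₁ := by rw [h]
    _ = _ := one_mul _

lemma rel3 : (PresentedGroup.of 1 : PiGroup a ε ε₁ ε₂) * .of 2 * (.of 1)⁻¹ =
    (PresentedGroup.of 2) ^ ε₂ := by
  have := rel_mk (rels := PiRels a ε ε₁ ε₂) (r := FreeGroup.of 1 * FreeGroup.of 2 *
    (FreeGroup.of 1)⁻¹ * FreeGroup.of 2 ^ (-ε₂)) (by right; right; rfl)
  simp only [map_mul, map_inv, map_zpow] at this
  have h : (PresentedGroup.of 1 : PiGroup a ε ε₁ ε₂) * .of 2 * (.of 1)⁻¹ *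
      (PresentedGroup.of 2) ^ (-ε₂) = 1 := this
  calc (PresentedGroup.of 1 : PiGroup a ε ε₁ ε₂) * .of 2 * (.of 1)⁻¹
      = ((PresentedGroup.of 1 : PiGroup a ε ε₁ ε₂) * .of 2 * (.of 1)⁻¹ *
        (PresentedGroup.of 2) ^ (-ε₂)) * (PresentedGroup.of 2) ^ ε₂ := by group
    _ = 1 * (PresentedGroup.of 2) ^ ε₂ := by rw [h]
    _ = _ := one_mul _

/-- the inverse relation `s₁⁻¹ s₃ s₁ = s₃^{ε₂}` when `ε₂² = 1`. -/
lemma rel3' (h2 : ε₂ * ε₂ = 1) :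
    ((PresentedGroup.of 1 : PiGroup a ε ε₁ ε₂))⁻¹ * .of 2 * (.of 1) =
    (PresentedGroup.of 2) ^ ε₂ := by
  have : (PresentedGroup.of 1 : PiGroup a ε ε₁ ε₂) * (PresentedGroup.of 2) ^ ε₂ * (.of 1)⁻¹ =
      PresentedGroup.of 2 := by
    rw [conj_zpow', rel3, ← zpow_mul, h2, zpow_one]
  calc ((PresentedGroup.of 1 : PiGroup a ε ε₁ ε₂))⁻¹ * .of 2 * (.of 1)
      = (.of 1)⁻¹ * ((PresentedGroup.of 1 : PiGroup a ε ε₁ ε₂) * (PresentedGroup.of 2) ^ ε₂ *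
        (.of 1)⁻¹) * (.of 1) := by rw [this]
    _ = (PresentedGroup.of 2) ^ ε₂ := by group

def fwdF (a ε ε₁ ε₂ : ℤ) : Fin 3 → PiGroup a ε (ε₁ * ε₂) ε₂ :=
  ![PresentedGroup.of 0 * .of 1, .of 1, .of 2]

def bwdF (a ε ε₁ ε₂ : ℤ) : Fin 3 → PiGroup a ε ε₁ ε₂ :=
  ![PresentedGroup.of 0 * (.of 1)⁻¹, .of 1, .of 2]

lemma fwd_rels (h2 : ε₂ * ε₂ = 1) :
    ∀ r ∈ PiRels a ε ε₁ ε₂, FreeGroup.lift (fwdF a ε ε₁ ε₂) r = 1 := by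
  rintro r (rfl | rfl | rfl) <;>
    simp only [map_mul, map_inv, map_zpow, FreeGroup.lift_apply_of, fwdF, Matrix.cons_val_zero,
      Matrix.cons_val_one, Matrix.head_cons, Matrix.cons_val_two, Matrix.tail_cons]
  · have : (PresentedGroup.of 0 : PiGroup a ε (ε₁ * ε₂) ε₂) * .of 1 * .of 1 *
        ((.of 0) * .of 1)⁻¹ = (PresentedGroup.of 2) ^ a * (PresentedGroup.of 1) ^ ε := by
      calc (PresentedGroup.of 0 : PiGroup a ε (ε₁ * ε₂) ε₂) * .of 1 * .of 1 *
          ((.of 0) * .of 1)⁻¹ = .of 0 * .of 1 * (.of 0)⁻¹ := by group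
        _ = _ := rel1
    rw [this]; group
  · have : (PresentedGroup.of 0 : PiGroup a ε (ε₁ * ε₂) ε₂) * .of 1 * .of 2 *
        ((.of 0) * .of 1)⁻¹ = (PresentedGroup.of 2) ^ ε₁ := by
      calc (PresentedGroup.of 0 : PiGroup a ε (ε₁ * ε₂) ε₂) * .of 1 * .of 2 *
          ((.of 0) * .of 1)⁻¹
          = .of 0 * (.of 1 * .of 2 * (.of 1)⁻¹) * (.of 0)⁻¹ := by group
        _ = .of 0 * (PresentedGroup.of 2) ^ ε₂ * (.of 0)⁻¹ := by rw [rel3]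
        _ = (PresentedGroup.of 0 * .of 2 * (.of 0)⁻¹) ^ ε₂ := conj_zpow' _ _ _
        _ = ((PresentedGroup.of 2) ^ (ε₁ * ε₂)) ^ ε₂ := by rw [rel2]
        _ = (PresentedGroup.of 2) ^ ε₁ := by
            rw [← zpow_mul, mul_assoc, h2, mul_one]
    rw [this]; group
  · rw [rel3]; group

lemma bwd_rels (h2 : ε₂ * ε₂ = 1) :
    ∀ r ∈ PiRels a ε (ε₁ * ε₂) ε₂, FreeGroup.lift (bwdF a ε ε₁ ε₂) r = 1 := by
  rintro r (rfl | rfl | rfl) <;>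
    simp only [map_mul, map_inv, map_zpow, FreeGroup.lift_apply_of, bwdF, Matrix.cons_val_zero,
      Matrix.cons_val_one, Matrix.head_cons, Matrix.cons_val_two, Matrix.tail_cons]
  · have : (PresentedGroup.of 0 : PiGroup a ε ε₁ ε₂) * (.of 1)⁻¹ * .of 1 *
        ((.of 0) * (.of 1)⁻¹)⁻¹ = (PresentedGroup.of 2) ^ a * (PresentedGroup.of 1) ^ ε := by
      calc (PresentedGroup.of 0 : PiGroup a ε ε₁ ε₂) * (.of 1)⁻¹ * .of 1 *
          ((.of 0) * (.of 1)⁻¹)⁻¹ = .of 0 * .of 1 * (.of 0)⁻¹ := by group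
        _ = _ := rel1
    rw [this]; group
  · have : (PresentedGroup.of 0 : PiGroup a ε ε₁ ε₂) * (.of 1)⁻¹ * .of 2 *
        ((.of 0) * (.of 1)⁻¹)⁻¹ = (PresentedGroup.of 2) ^ (ε₁ * ε₂) := by
      calc (PresentedGroup.of 0 : PiGroup a ε ε₁ ε₂) * (.of 1)⁻¹ * .of 2 *
          ((.of 0) * (.of 1)⁻¹)⁻¹
          = .of 0 * ((.of 1)⁻¹ * .of 2 * .of 1) * (.of 0)⁻¹ := by group
        _ = .of 0 * (PresentedGroup.of 2) ^ ε₂ * (.of 0)⁻¹ := by rw [rel3' h2]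
        _ = (PresentedGroup.of 0 * .of 2 * (.of 0)⁻¹) ^ ε₂ := conj_zpow' _ _ _
        _ = ((PresentedGroup.of 2) ^ ε₁) ^ ε₂ := by rw [rel2]
        _ = (PresentedGroup.of 2) ^ (ε₁ * ε₂) := by rw [← zpow_mul]
    rw [this]; group
  · rw [rel3]; group

end PiAux

/-- `Π(a, ε, ε₁, ε₂) ≅ Π(a, ε, ε₁ε₂, ε₂)`. -/
theorem PiGroup_iso_mul_sign (a ε ε₁ ε₂ : ℤ)
    (hε : ε = 1 ∨ ε = -1) (hε₁ : ε₁ = 1 ∨ ε₁ = -1) (hε₂ : ε₂ = 1 ∨ ε₂ = -1) :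
    Nonempty (PiGroup a ε ε₁ ε₂ ≃* PiGroup a ε (ε₁ * ε₂) ε₂) := by
  have h2 : ε₂ * ε₂ = 1 := by rcases hε₂ with rfl | rfl <;> norm_num
  refine ⟨MonoidHom.toMulEquiv (PresentedGroup.toGroup (PiAux.fwd_rels h2))
    (PresentedGroup.toGroup (PiAux.bwd_rels h2)) ?_ ?_⟩
  · apply PresentedGroup.ext
    intro x
    fin_cases x <;>
      simp [PresentedGroup.toGroup.of, PiAux.fwdF, PiAux.bwdF]
  · apply PresentedGroup.ext
    intro x
    fin_cases x <;>
      simp [PresentedGroup.toGroup.of, PiAux.fwdF, PiAux.bwdF]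
end

section
/- For every integer a, the group Π(a, 1, 1, 1) = ⟨s₁, s₂, s₃ ∣ [s₁, s₂] = s₃^a, [s₁, s₃] = [s₂, s₃] = 1⟩ is a nilpotent group. -/
section Aux

lemma piaux_fin3_cases : ∀ j : Fin 3, j = 0 ∨ j = 1 ∨ j = 2 := by decide

lemma piaux_rel_one {α : Type*} {rels : Set (FreeGroup α)} {r : FreeGroup α} (h : r ∈ rels) :
    PresentedGroup.mk rels r = 1 :=
  (QuotientGroup.eq_one_iff _).2 (Subgroup.subset_normalClosure h)

lemma piaux_comm02 (a : ℤ) :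
    (PresentedGroup.of 0 : PiGroup a 1 1 1) * PresentedGroup.of 2 =
      PresentedGroup.of 2 * PresentedGroup.of 0 := by
  have h := piaux_rel_one (rels := PiRels a 1 1 1)
    (r := FreeGroup.of 0 * FreeGroup.of 2 * (FreeGroup.of 0)⁻¹ * FreeGroup.of 2 ^ (-(1:ℤ)))
    (by simp [PiRels])
  simp only [map_mul, map_inv, map_zpow] at h
  have h' : (PresentedGroup.of 0 : PiGroup a 1 1 1) * PresentedGroup.of 2 *
      (PresentedGroup.of 0)⁻¹ * (PresentedGroup.of 2) ^ (-(1:ℤ)) = 1 := h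
  rw [zpow_neg, zpow_one] at h'
  have h2 := mul_inv_eq_one.mp h'
  exact mul_inv_eq_iff_eq_mul.mp h2

lemma piaux_comm12 (a : ℤ) :
    (PresentedGroup.of 1 : PiGroup a 1 1 1) * PresentedGroup.of 2 =
      PresentedGroup.of 2 * PresentedGroup.of 1 := by
  have h := piaux_rel_one (rels := PiRels a 1 1 1)
    (r := FreeGroup.of 1 * FreeGroup.of 2 * (FreeGroup.of 1)⁻¹ * FreeGroup.of 2 ^ (-(1:ℤ)))
    (by simp [PiRels])
  simp only [map_mul, map_inv, map_zpow] at h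
  have h' : (PresentedGroup.of 1 : PiGroup a 1 1 1) * PresentedGroup.of 2 *
      (PresentedGroup.of 1)⁻¹ * (PresentedGroup.of 2) ^ (-(1:ℤ)) = 1 := h
  rw [zpow_neg, zpow_one] at h'
  have h2 := mul_inv_eq_one.mp h'
  exact mul_inv_eq_iff_eq_mul.mp h2

lemma piaux_comm01 (a : ℤ) :
    (PresentedGroup.of 0 : PiGroup a 1 1 1) * PresentedGroup.of 1 =
      (PresentedGroup.of 2) ^ a * (PresentedGroup.of 1 * PresentedGroup.of 0) := by
  have h := piaux_rel_one (rels := PiRels a 1 1 1)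
    (r := FreeGroup.of 0 * FreeGroup.of 1 * (FreeGroup.of 0)⁻¹ * FreeGroup.of 1 ^ (-(1:ℤ)) *
      FreeGroup.of 2 ^ (-a)) (by simp [PiRels])
  simp only [map_mul, map_inv, map_zpow] at h
  have h' : (PresentedGroup.of 0 : PiGroup a 1 1 1) * PresentedGroup.of 1 *
      (PresentedGroup.of 0)⁻¹ * (PresentedGroup.of 1) ^ (-(1:ℤ)) *
      (PresentedGroup.of 2) ^ (-a) = 1 := h
  rw [zpow_neg, zpow_one, zpow_neg] at h'
  have h2 := mul_inv_eq_one.mp h'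
  -- h2 : s0 * s1 * s0⁻¹ * s1⁻¹ = s2^a
  calc (PresentedGroup.of 0 : PiGroup a 1 1 1) * PresentedGroup.of 1
      = (PresentedGroup.of 0 * PresentedGroup.of 1 * (PresentedGroup.of 0)⁻¹ *
          (PresentedGroup.of 1)⁻¹) * (PresentedGroup.of 1 * PresentedGroup.of 0) := by group
    _ = (PresentedGroup.of 2) ^ a * (PresentedGroup.of 1 * PresentedGroup.of 0) := by rw [h2]

lemma piaux_s2_center (a : ℤ) :
    (PresentedGroup.of 2 : PiGroup a 1 1 1) ∈ Subgroup.center (PiGroup a 1 1 1) := by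
  rw [Subgroup.mem_center_iff]
  intro g
  have hg : g ∈ Subgroup.centralizer {(PresentedGroup.of 2 : PiGroup a 1 1 1)} := by
    refine PresentedGroup.generated_by _ _ (fun j => ?_) g
    rw [Subgroup.mem_centralizer_iff]
    rintro h rfl
    rcases piaux_fin3_cases j with rfl | rfl | rfl
    · exact (piaux_comm02 a).symm
    · exact (piaux_comm12 a).symm
    · rfl
  exact ((Subgroup.mem_centralizer_iff.mp hg) _ rfl).symm

end Aux

/-- For every integer `a`, the group `Π(a, 1, 1, 1)`, i.e.
`⟨s₁, s₂, s₃ ∣ [s₁,s₂] = s₃^a, [s₁,s₃] = [s₂,s₃] = 1⟩`, is nilpotent. -/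
theorem PiGroup_nilpotent (a : ℤ) : Group.IsNilpotent (PiGroup a 1 1 1) := by
  set G := PiGroup a 1 1 1
  apply of_quotient_center_nilpotent
  set π : G →* G ⧸ Subgroup.center G := QuotientGroup.mk' (Subgroup.center G) with hπ
  have hs2 : π (PresentedGroup.of 2) = 1 :=
    (QuotientGroup.eq_one_iff _).2 (piaux_s2_center a)
  have h01 : π (PresentedGroup.of 0) * π (PresentedGroup.of 1) =
      π (PresentedGroup.of 1) * π (PresentedGroup.of 0) := by
    have := congrArg π (piaux_comm01 a)
    simp only [map_mul, map_zpow, hs2, one_zpow, one_mul] at this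
    exact this
  -- every generator image is central in the quotient
  have hcent : ∀ j : Fin 3, π (PresentedGroup.of j) ∈ Subgroup.center (G ⧸ Subgroup.center G) := by
    intro j
    rw [Subgroup.mem_center_iff]
    intro y
    obtain ⟨g, rfl⟩ := QuotientGroup.mk'_surjective _ y
    have hg : g ∈ (Subgroup.centralizer {π (PresentedGroup.of j)}).comap π := by
      refine PresentedGroup.generated_by _ _ (fun k => ?_) g
      rw [Subgroup.mem_comap, Subgroup.mem_centralizer_iff]
      rintro h rfl
      rcases piaux_fin3_cases j with rfl | rfl | rfl <;>
        rcases piaux_fin3_cases k with rfl | rfl | rfl <;>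
          first
            | rfl
            | exact h01
            | exact h01.symm
            | simp [hs2]
    exact ((Subgroup.mem_centralizer_iff.mp (Subgroup.mem_comap.mp hg)) _ rfl).symm
  -- hence the quotient is abelian, so nilpotent
  refine ⟨⟨1, ?_⟩⟩
  rw [upperCentralSeries_one, eq_top_iff]
  intro x _
  obtain ⟨g, rfl⟩ := QuotientGroup.mk'_surjective _ x
  exact PresentedGroup.generated_by _ ((Subgroup.center _).comap π)
    (fun j => Subgroup.mem_comap.mpr (hcent j)) g
end

section
/- For integers a and b, the group Π(a, 1, 1, 1) is isomorphic to Π(b, 1, 1, 1) if and only if |a| = |b|. -/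
/-! The swap `s₁ ↔ s₂` inverts the commutator `[s₁, s₂]`, which gives `Π(a) ≅ Π(-a)`.
Conversely, a homomorphism from `Π(c)` to an abelian group is a triple `(x, y, z)` with
`z ^ c = 1`, so there are `n² · #{z ∈ ℤ/n | c z = 0}` homomorphisms `Π(c) → ℤ/n`, and this is
`n³` exactly when `n ∣ c`. If `Π(a) ≅ Π(b)`, then `a` and `b` have the same positive divisors. -/

open scoped commutatorElement

theorem PresentedGroup.lift_of_eq_one {α : Type*} {rels : Set (FreeGroup α)} {r : FreeGroup α}
    (hr : r ∈ rels) : FreeGroup.lift (PresentedGroup.of (rels := rels)) r = 1 := by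
  have : FreeGroup.lift (PresentedGroup.of (rels := rels)) = PresentedGroup.mk rels :=
    FreeGroup.ext_hom _ _ fun _ => rfl
  rw [this, PresentedGroup.one_of_mem hr]

theorem Nat.card_subtype_eq_card_iff {α : Type*} [Finite α] (p : α → Prop) :
    Nat.card {x // p x} = Nat.card α ↔ ∀ x, p x :=
  (Set.eq_univ_iff_ncard {x | p x}).symm.trans Set.eq_univ_iff_forall

theorem ZMod.forall_zpow_eq_one_iff (c : ℤ) (n : ℕ) :
    (∀ z : Multiplicative (ZMod n), z ^ c = 1) ↔ (n : ℤ) ∣ c := by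
  simp only [Multiplicative.forall, ← ofAdd_zsmul, ofAdd_eq_one, zsmul_eq_mul,
    ← ZMod.intCast_zmod_eq_zero_iff_dvd]
  exact ⟨fun h => by simpa using h 1, fun h z => by rw [h, zero_mul]⟩

theorem Int.dvd_of_forall_natCast_dvd {a b : ℤ} (h : ∀ n : ℕ, n ≠ 0 → (n : ℤ) ∣ a → (n : ℤ) ∣ b) :
    a ∣ b := by
  rcases eq_or_ne a 0 with rfl | ha
  · have := h (b.natAbs + 1) b.natAbs.succ_ne_zero (dvd_zero _)
    rw [Int.eq_zero_of_dvd_of_natAbs_lt_natAbs this (by omega)]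
  · exact Int.natAbs_dvd.1 (h _ (Int.natAbs_ne_zero.2 ha) (Int.natAbs_dvd.2 dvd_rfl))

namespace PiGroup

open PresentedGroup

theorem forall_lift_eq_one_iff {G : Type*} [Group G] (c : ℤ) (f : Fin 3 → G) :
    (∀ r ∈ PiRels c 1 1 1, FreeGroup.lift f r = 1) ↔
      ⁅f 0, f 1⁆ = f 2 ^ c ∧ Commute (f 0) (f 2) ∧ Commute (f 1) (f 2) := by
  simp only [PiRels, Set.mem_insert_iff, Set.mem_singleton_iff, forall_eq_or_imp, forall_eq,
    map_mul, map_zpow, map_inv, FreeGroup.lift_apply_of, zpow_neg, zpow_one,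
    ← commutatorElement_def, map_commutatorElement, mul_inv_eq_one,
    commutatorElement_eq_one_iff_commute]

def swapHom {c d : ℤ} (h : c + d = 0) : PiGroup c 1 1 1 →* PiGroup d 1 1 1 :=
  toGroup (f := ![of 1, of 0, of 2]) <| by
    obtain ⟨hcomm, h02, h12⟩ := (forall_lift_eq_one_iff d of).1 fun _ => lift_of_eq_one
    refine (forall_lift_eq_one_iff c _).2 ⟨?_, h12, h02⟩
    show ⁅of 1, of 0⁆ = of 2 ^ c
    rw [← commutatorElement_inv, hcomm, ← zpow_neg, neg_eq_of_add_eq_zero_left h]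

theorem swapHom_comp_swapHom {c d : ℤ} (h : c + d = 0) (h' : d + c = 0) :
    (swapHom h').comp (swapHom h) = MonoidHom.id _ :=
  PresentedGroup.ext fun i => by fin_cases i <;> simp [swapHom, toGroup.of]

def negEquiv (c : ℤ) : PiGroup c 1 1 1 ≃* PiGroup (-c) 1 1 1 :=
  MonoidHom.toMulEquiv (swapHom (add_neg_cancel c)) (swapHom (neg_add_cancel c))
    (swapHom_comp_swapHom _ _) (swapHom_comp_swapHom _ _)

def homEquiv (c : ℤ) (C : Type*) [CommGroup C] :
    (PiGroup c 1 1 1 →* C) ≃ C × C × {z : C // z ^ c = 1} where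
  toFun φ := (φ (of 0), φ (of 1), ⟨φ (of 2), by
    rw [← map_zpow, ← ((forall_lift_eq_one_iff c of).1 fun _ => lift_of_eq_one).1,
      map_commutatorElement, commutatorElement_eq_one_iff_commute]
    exact Commute.all _ _⟩)
  invFun x := toGroup (f := ![x.1, x.2.1, x.2.2.1]) <| (forall_lift_eq_one_iff c _).2
    ⟨(commutatorElement_eq_one_iff_commute.2 (Commute.all _ _)).trans x.2.2.2.symm,
      Commute.all _ _, Commute.all _ _⟩
  left_inv φ := PresentedGroup.ext fun i => by fin_cases i <;> simp [toGroup.of]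
  right_inv x := by simp [toGroup.of]

theorem card_hom (c : ℤ) (C : Type*) [CommGroup C] :
    Nat.card (PiGroup c 1 1 1 →* C) = Nat.card C ^ 2 * Nat.card {z : C // z ^ c = 1} := by
  rw [Nat.card_congr (homEquiv c C), Nat.card_prod, Nat.card_prod]
  ring

theorem natCast_dvd_iff_card_hom (c : ℤ) (n : ℕ) [NeZero n] :
    (n : ℤ) ∣ c ↔ Nat.card (PiGroup c 1 1 1 →* Multiplicative (ZMod n)) = n ^ 3 := by
  have hcard : Nat.card (Multiplicative (ZMod n)) = n := Nat.card_zmod n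
  rw [card_hom, hcard, show n ^ 3 = n ^ 2 * n by ring,
    Nat.mul_left_cancel_iff (pow_pos (NeZero.pos n) 2), ← ZMod.forall_zpow_eq_one_iff,
    ← Nat.card_subtype_eq_card_iff, hcard]

end PiGroup

/-- `Π(a, 1, 1, 1) ≅ Π(b, 1, 1, 1)` if and only if `|a| = |b|`. -/
theorem PiGroup_nil_iso_iff (a b : ℤ) :
    Nonempty (PiGroup a 1 1 1 ≃* PiGroup b 1 1 1) ↔ |a| = |b| := by
  constructor
  · rintro ⟨e⟩
    have hdvd (n : ℕ) (hn : n ≠ 0) : (n : ℤ) ∣ a ↔ (n : ℤ) ∣ b := by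
      have : NeZero n := ⟨hn⟩
      rw [PiGroup.natCast_dvd_iff_card_hom, PiGroup.natCast_dvd_iff_card_hom,
        Nat.card_congr e.monoidHomCongrLeftEquiv]
    rw [Int.abs_eq_natAbs, Int.abs_eq_natAbs, Int.natAbs_eq_of_dvd_dvd
      (Int.dvd_of_forall_natCast_dvd fun n hn => (hdvd n hn).1)
      (Int.dvd_of_forall_natCast_dvd fun n hn => (hdvd n hn).2)]
  · intro h
    rcases abs_eq_abs.1 h with rfl | rfl
    · exact ⟨MulEquiv.refl _⟩
    · exact ⟨(PiGroup.negEquiv b).symm⟩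
end

section
/- For every integer a, the abelianization of the group Π(a, 1, 1, 1) is isomorphic to Multiplicative (ℤ × ℤ × ZMod a.natAbs), i.e., to ℤ² × ℤ/|a|ℤ. -/
namespace PiAux

variable (a : ℤ)

abbrev G := Abelianization (PiGroup a 1 1 1)

def g (i : Fin 3) : G a := Abelianization.of (PresentedGroup.of i)

abbrev T := Multiplicative (ℤ × ℤ × ZMod a.natAbs)

def fgen : Fin 3 → T a :=
  ![Multiplicative.ofAdd (1, 0, 0), Multiplicative.ofAdd (0, 1, 0),
    Multiplicative.ofAdd (0, 0, 1)]

lemma rels_mapped : ∀ r ∈ PiRels a 1 1 1, FreeGroup.lift (fgen a) r = 1 := by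
  intro r hr
  rcases hr with h | h | h <;> subst h <;>
    simp only [map_mul, map_inv, map_zpow, FreeGroup.lift_apply_of, fgen, Matrix.cons_val_zero,
      Matrix.cons_val_one, Matrix.head_cons, Matrix.cons_val_two, Matrix.tail_cons,
      ← ofAdd_neg, ← ofAdd_zsmul, ← ofAdd_add, ofAdd_eq_one, Prod.ext_iff, Prod.smul_mk,
      Prod.mk_add_mk, smul_eq_mul, zsmul_one] <;>
    simp [Prod.ext_iff] <;>
    exact (ZMod.intCast_zmod_eq_zero_iff_dvd a a.natAbs).mpr (Int.natAbs_dvd.mpr dvd_rfl)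

/-- The forward homomorphism. -/
def φ : G a →* T a :=
  Abelianization.lift (PresentedGroup.toGroup (rels_mapped a))

lemma φ_g (i : Fin 3) : φ a (g a i) = fgen a i := by
  simp [φ, g, PresentedGroup.toGroup.of]

lemma g2_pow : g a 2 ^ (a.natAbs : ℤ) = 1 := by
  have hrel : (FreeGroup.of 0 * FreeGroup.of 1 * (FreeGroup.of 0)⁻¹ * FreeGroup.of 1 ^ (-(1:ℤ)) *
      FreeGroup.of 2 ^ (-a)) ∈ PiRels a 1 1 1 := Or.inl rfl
  have h1 : (PresentedGroup.mk (PiRels a 1 1 1) (FreeGroup.of 0 * FreeGroup.of 1 *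
      (FreeGroup.of 0)⁻¹ * FreeGroup.of 1 ^ (-(1:ℤ)) * FreeGroup.of 2 ^ (-a))) = 1 :=
    (QuotientGroup.eq_one_iff _).mpr (Subgroup.subset_normalClosure hrel)
  have h2 : g a 0 * g a 1 * (g a 0)⁻¹ * (g a 1) ^ (-(1:ℤ)) * (g a 2) ^ (-a) = 1 := by
    have := congrArg Abelianization.of h1
    simpa [g, PresentedGroup.of, map_mul, map_inv, map_zpow] using this
  have h3 : (g a 2) ^ (-a) = 1 := by
    have hc : g a 0 * g a 1 * (g a 0)⁻¹ * (g a 1) ^ (-(1:ℤ)) = 1 := by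
      group
      rw [mul_comm (g a 0) (g a 1)]
      group
    rw [hc, one_mul] at h2
    exact h2
  have h4 : (g a 2) ^ a = 1 := by
    rw [← inv_inj, ← zpow_neg] at h3 ⊢
    simpa using h3
  rcases Int.natAbs_eq a with he | he
  · rw [← he]; exact h4
  · rw [← neg_neg (a.natAbs : ℤ), ← he, zpow_neg, h4, inv_one]

/-- The backward homomorphism, built additively. -/
def ψadd : (ℤ × ℤ × ZMod a.natAbs) →+ Additive (G a) :=
  ((zmultiplesHom _ (Additive.ofMul (g a 0))).comp (AddMonoidHom.fst _ _)) +
  (((zmultiplesHom _ (Additive.ofMul (g a 1))).comp (AddMonoidHom.fst _ _)) +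
    ((ZMod.lift a.natAbs ⟨zmultiplesHom _ (Additive.ofMul (g a 2)), by
        simpa [zmultiplesHom, ← ofMul_zpow] using g2_pow a⟩).comp
      (AddMonoidHom.snd _ _))).comp (AddMonoidHom.snd _ _)

def ψ : T a →* G a := AddMonoidHom.toMultiplicativeLeft (ψadd a)

lemma ψ_apply (p q : ℤ) (r : ZMod a.natAbs) :
    ψ a (Multiplicative.ofAdd (p, q, r)) = (g a 0) ^ p * ((g a 1) ^ q *
      Additive.toMul (ZMod.lift a.natAbs ⟨zmultiplesHom _ (Additive.ofMul (g a 2)), by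
        simpa [zmultiplesHom, ← ofMul_zpow] using g2_pow a⟩ r)) := by
  rfl

lemma ψ_φ : (ψ a).comp (φ a) = MonoidHom.id (G a) := by
  apply Abelianization.hom_ext
  apply PresentedGroup.ext
  intro x
  fin_cases x
  · show ψ a (φ a (g a 0)) = g a 0
    rw [φ_g, show fgen a 0 = Multiplicative.ofAdd ((1:ℤ), (0:ℤ), (0 : ZMod a.natAbs)) from rfl,
      ψ_apply]
    simp [map_zero]
  · show ψ a (φ a (g a 1)) = g a 1
    rw [φ_g, show fgen a 1 = Multiplicative.ofAdd ((0:ℤ), (1:ℤ), (0 : ZMod a.natAbs)) from rfl,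
      ψ_apply]
    simp [map_zero]
  · show ψ a (φ a (g a 2)) = g a 2
    rw [φ_g, show fgen a 2 = Multiplicative.ofAdd ((0:ℤ), (0:ℤ), (1 : ZMod a.natAbs)) from rfl,
      ψ_apply]
    rw [show (1 : ZMod a.natAbs) = ((1:ℤ) : ZMod a.natAbs) by simp, ZMod.lift_coe]
    simp

lemma φ_ψ : (φ a).comp (ψ a) = MonoidHom.id (T a) := by
  refine MonoidHom.ext fun x => ?_
  obtain ⟨⟨p, q, r⟩, rfl⟩ : ∃ y, Multiplicative.ofAdd y = x := ⟨x, rfl⟩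
  obtain ⟨k, rfl⟩ := ZMod.intCast_surjective r
  rw [MonoidHom.comp_apply, ψ_apply, ZMod.lift_coe]
  simp only [map_mul, map_zpow, φ_g]
  show _ = Multiplicative.ofAdd (p, q, (k : ZMod a.natAbs))
  simp only [zmultiplesHom_apply, toMul_zsmul, toMul_ofMul, map_zpow, φ_g]
  simp [fgen, ← ofAdd_zsmul, ← ofAdd_add, Prod.ext_iff, Prod.smul_mk, Prod.mk_add_mk,
    smul_eq_mul, zsmul_one]

theorem iso : Nonempty (G a ≃* T a) :=
  ⟨MonoidHom.toMulEquiv (φ a) (ψ a) (ψ_φ a) (φ_ψ a)⟩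

end PiAux

/-- The abelianization of `Π(a, 1, 1, 1)` is isomorphic to `ℤ² × ℤ/|a|ℤ`. -/
theorem PiGroup_abelianization (a : ℤ) :
    Nonempty (Abelianization (PiGroup a 1 1 1) ≃*
      Multiplicative (ℤ × ℤ × ZMod a.natAbs)) := PiAux.iso a
end

section
/- For nonzero integers a and b, the group Π(a, −1, −1, 1) is isomorphic to Π(b, −1, −1, 1) if and only if |a| = |b|. -/
/-!
A homomorphism `Π(a, ε, ε₁, ε₂) → G` is the same as a triple `(x, y, z)` in `G` satisfying the
defining relations, so isomorphic groups have equally many such triples in every finite group.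
With `ε = ε₁ = -1`, `ε₂ = 1`: in `ℤ/2` the count is `8` or `4` according to the parity of `a`.
In the dihedral group `D_n`, the triples with `z² = 1` only see `a` modulo `2`, and the others
are exactly `(sr i, r j, r k)` with `a k = 0` and `2 k ≠ 0`. So for `a ≡ b (mod 2)` equal counts
force the annihilators of `a` and `b` in `ℤ/n` to have the same size; taking `n = |b|` gives
`b ∣ a`. Conversely, `s₃ ↦ s₃⁻¹` is an isomorphism `Π(a, ε, ε₁, ε₂) ≅ Π(-a, ε, ε₁, ε₂)`.
-/

lemma Set.ncard_eq_ncard_iff_of_inter_eq {α : Type*} [Finite α] {s t u : Set α}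
    (h : s ∩ u = t ∩ u) : s.ncard = t.ncard ↔ (s \ u).ncard = (t \ u).ncard := by
  rw [← ncard_inter_add_ncard_sdiff_eq_ncard s u, ← ncard_inter_add_ncard_sdiff_eq_ncard t u, h]
  omega

namespace PresentedGroup

variable {α G : Type*} [Group G] {rels : Set (FreeGroup α)}

lemma lift_comp_of_eq_comp_mk (φ : PresentedGroup rels →* G) :
    FreeGroup.lift (φ ∘ of) = φ.comp (mk rels) :=
  FreeGroup.ext_hom _ _ fun _ => by simp [of]

def homEquiv :
    (PresentedGroup rels →* G) ≃ {f : α → G // ∀ r ∈ rels, FreeGroup.lift f r = 1} where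
  toFun φ := ⟨φ ∘ of, fun r hr => by
    rw [lift_comp_of_eq_comp_mk, MonoidHom.comp_apply, one_of_mem hr, map_one]⟩
  invFun f := toGroup f.2
  left_inv φ := ext fun _ => toGroup.of _
  right_inv f := Subtype.ext <| funext fun _ => toGroup.of _

end PresentedGroup

section Triples

variable {G : Type*} [Group G]

def IsPiTriple (a ε ε₁ ε₂ : ℤ) (x y z : G) : Prop :=
  x * y * x⁻¹ = z ^ a * y ^ ε ∧ x * z * x⁻¹ = z ^ ε₁ ∧ y * z * y⁻¹ = z ^ ε₂

variable (G) in
def piTriples (a ε ε₁ ε₂ : ℤ) : Set (G × G × G) :=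
  {p | IsPiTriple a ε ε₁ ε₂ p.1 p.2.1 p.2.2}

variable {a ε ε₁ ε₂ : ℤ}

lemma forall_mem_piRels_iff (f : Fin 3 → G) :
    (∀ r ∈ PiRels a ε ε₁ ε₂, FreeGroup.lift f r = 1) ↔
      IsPiTriple a ε ε₁ ε₂ (f 0) (f 1) (f 2) := by
  simp only [PiRels, Set.mem_insert_iff, Set.mem_singleton_iff, forall_eq_or_imp, forall_eq,
    map_mul, map_inv, map_zpow, FreeGroup.lift_apply_of, IsPiTriple, zpow_neg,
    mul_inv_eq_iff_eq_mul, one_mul]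

@[simp]
lemma mem_piTriples {x y z : G} :
    (x, y, z) ∈ piTriples G a ε ε₁ ε₂ ↔ IsPiTriple a ε ε₁ ε₂ x y z := Iff.rfl

def piGroupHomEquiv (a ε ε₁ ε₂ : ℤ) (G : Type*) [Group G] :
    (PiGroup a ε ε₁ ε₂ →* G) ≃ piTriples G a ε ε₁ ε₂ :=
  PresentedGroup.homEquiv.trans
    { toFun f := ⟨(f.1 0, f.1 1, f.1 2), (forall_mem_piRels_iff f.1).mp f.2⟩
      invFun p := ⟨![p.1.1, p.1.2.1, p.1.2.2], (forall_mem_piRels_iff _).mpr p.2⟩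
      left_inv f := Subtype.ext <| funext fun i => by fin_cases i <;> rfl
      right_inv _ := rfl }

lemma piGroupHomEquiv_symm_apply_of (p : piTriples G a ε ε₁ ε₂) (i : Fin 3) :
    (piGroupHomEquiv a ε ε₁ ε₂ G).symm p (.of i) = ![p.1.1, p.1.2.1, p.1.2.2] i :=
  PresentedGroup.toGroup.of ((forall_mem_piRels_iff ![p.1.1, p.1.2.1, p.1.2.2]).mpr p.2)

lemma isPiTriple_of :
    IsPiTriple a ε ε₁ ε₂ (PresentedGroup.of 0 : PiGroup a ε ε₁ ε₂) (.of 1) (.of 2) :=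
  (piGroupHomEquiv a ε ε₁ ε₂ _ (.id _)).2

lemma IsPiTriple.inv_right {x y z : G} (h : IsPiTriple a ε ε₁ ε₂ x y z) :
    IsPiTriple (-a) ε ε₁ ε₂ x y z⁻¹ := by
  obtain ⟨h₁, h₂, h₃⟩ := h
  refine ⟨by rwa [inv_zpow', neg_neg], ?_, ?_⟩
  · rw [inv_zpow, ← h₂]; group
  · rw [inv_zpow, ← h₃]; group

lemma ncard_piTriples_eq_of_mulEquiv {a' ε' ε₁' ε₂' : ℤ}
    (e : PiGroup a ε ε₁ ε₂ ≃* PiGroup a' ε' ε₁' ε₂') (G : Type*) [Group G] :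
    (piTriples G a ε ε₁ ε₂).ncard = (piTriples G a' ε' ε₁' ε₂').ncard :=
  Nat.card_congr <| (piGroupHomEquiv _ _ _ _ G).symm.trans <|
    e.monoidHomCongrLeftEquiv.trans (piGroupHomEquiv _ _ _ _ G)

def piGroupHomOfEqNeg {b : ℤ} (h : b = -a) : PiGroup a ε ε₁ ε₂ →* PiGroup b ε ε₁ ε₂ :=
  (piGroupHomEquiv a ε ε₁ ε₂ _).symm
    ⟨(.of 0, .of 1, (.of 2)⁻¹), by
      have := (isPiTriple_of (a := b) (ε := ε) (ε₁ := ε₁) (ε₂ := ε₂)).inv_right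
      rwa [show -b = a by omega] at this⟩

def piGroupMulEquivOfEqNeg {b : ℤ} (h : b = -a) : PiGroup a ε ε₁ ε₂ ≃* PiGroup b ε ε₁ ε₂ :=
  MonoidHom.toMulEquiv (piGroupHomOfEqNeg h) (piGroupHomOfEqNeg (neg_eq_iff_eq_neg.mp h.symm))
    (PresentedGroup.ext fun i => by
      fin_cases i <;> simp [piGroupHomOfEqNeg, piGroupHomEquiv_symm_apply_of])
    (PresentedGroup.ext fun i => by
      fin_cases i <;> simp [piGroupHomOfEqNeg, piGroupHomEquiv_symm_apply_of])

end Triples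

section Parity

variable {G : Type*} [Group G] {a b ε ε₁ ε₂ : ℤ}

lemma isPiTriple_iff_of_sq_eq_one {x y z : G} (hz : z * z = 1) (h : Even (a - b)) :
    IsPiTriple a ε ε₁ ε₂ x y z ↔ IsPiTriple b ε ε₁ ε₂ x y z := by
  have hzab : z ^ a = z ^ b := by
    refine zpow_eq_zpow_iff_modEq.mpr (Int.ModEq.symm (Int.modEq_iff_dvd.mpr ?_))
    exact (Int.natCast_dvd_natCast.mpr (orderOf_dvd_of_pow_eq_one (by rwa [pow_two]))).trans
      (even_iff_two_dvd.mp h)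
  simp only [IsPiTriple, hzab]

variable (G) in
lemma piTriples_inter_sq_eq_one (h : Even (a - b)) :
    piTriples G a ε ε₁ ε₂ ∩ {p | p.2.2 * p.2.2 = 1} =
      piTriples G b ε ε₁ ε₂ ∩ {p | p.2.2 * p.2.2 = 1} := by
  ext ⟨x, y, z⟩
  simp only [Set.mem_inter_iff, mem_piTriples, Set.mem_ofPred_eq]
  exact and_congr_left (isPiTriple_iff_of_sq_eq_one · h)

lemma ncard_piTriples_multiplicative_zmod_two (a : ℤ) :
    (piTriples (Multiplicative (ZMod 2)) a (-1) (-1) 1).ncard = if Even a then 8 else 4 := by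
  have hsq : ∀ z : Multiplicative (ZMod 2), z * z = 1 := by decide
  split_ifs with ha
  · have hT : piTriples (Multiplicative (ZMod 2)) a (-1) (-1) 1 = Set.univ := by
      have h₀ : ∀ x y z : Multiplicative (ZMod 2), IsPiTriple 0 (-1) (-1) 1 x y z := by
        unfold IsPiTriple; decide
      ext ⟨x, y, z⟩
      simpa using (isPiTriple_iff_of_sq_eq_one (hsq z) (by simpa using ha)).mpr (h₀ x y z)
    simp [hT]
  · have hT : piTriples (Multiplicative (ZMod 2)) a (-1) (-1) 1 =
        Set.univ ×ˢ Set.univ ×ˢ {1} := by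
      have h₁ : ∀ x y z : Multiplicative (ZMod 2), IsPiTriple 1 (-1) (-1) 1 x y z ↔ z = 1 := by
        unfold IsPiTriple; decide
      have hodd : Even (a - 1) := (Int.not_even_iff_odd.mp ha).sub_odd odd_one
      ext ⟨x, y, z⟩
      simpa [← h₁ x y] using isPiTriple_iff_of_sq_eq_one (hsq z) hodd
    rw [hT, Set.ncard_prod, Set.ncard_prod]
    simp

lemma even_sub_of_ncard_piTriples_eq
    (h : (piTriples (Multiplicative (ZMod 2)) a (-1) (-1) 1).ncard =
      (piTriples (Multiplicative (ZMod 2)) b (-1) (-1) 1).ncard) :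
    Even (a - b) := by
  rw [ncard_piTriples_multiplicative_zmod_two, ncard_piTriples_multiplicative_zmod_two] at h
  rw [Int.even_sub]
  split_ifs at h <;> first | omega | tauto

end Parity

section Dihedral

open DihedralGroup

variable {n : ℕ} {a b : ℤ}

lemma isPiTriple_sr_r_r_iff {i j k : ZMod n} :
    IsPiTriple a (-1) (-1) 1 (sr i) (r j) (r k) ↔ (a : ZMod n) * k = 0 := by
  simp only [IsPiTriple, sr_mul_r, sr_mul_sr, inv_sr, r_mul_r, inv_r, r_zpow, zpow_one,
    zpow_neg, r.injEq]
  exact ⟨fun h => by linear_combination -h.1,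
    fun h => ⟨by linear_combination -h, by ring, by ring⟩⟩

lemma exists_eq_sr_r_r_of_isPiTriple {x y z : DihedralGroup n} (hz : z * z ≠ 1)
    (h : IsPiTriple a (-1) (-1) 1 x y z) : ∃ i j k, x = sr i ∧ y = r j ∧ z = r k := by
  obtain ⟨-, hx, hy⟩ := h
  obtain ⟨k, rfl⟩ : ∃ k, z = r k := by
    cases z with
    | r k => exact ⟨k, rfl⟩
    | sr k => exact absurd (sr_mul_self k) hz
  have hk : k ≠ -k := fun hk => hz <| by rw [r_mul_r, one_def, r.injEq]; linear_combination hk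
  cases x with
  | r i => simp [r_mul_r, inv_r, hk] at hx
  | sr i =>
    cases y with
    | r j => exact ⟨i, j, k, rfl, rfl, rfl⟩
    | sr j => simp [sr_mul_r, sr_mul_sr, inv_sr, hk.symm] at hy

lemma piTriples_dihedral_diff_sq_eq_one :
    piTriples (DihedralGroup n) a (-1) (-1) 1 \ {p | p.2.2 * p.2.2 = 1} =
      Set.range sr ×ˢ Set.range r ×ˢ (r '' ({k | (a : ZMod n) * k = 0} \ {k | k + k = 0})) := by
  ext ⟨x, y, z⟩
  simp only [Set.mem_sdiff, mem_piTriples, Set.mem_ofPred_eq, Set.mem_prod, Set.mem_range,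
    Set.mem_image]
  constructor
  · rintro ⟨h, hz⟩
    obtain ⟨i, j, k, rfl, rfl, rfl⟩ := exists_eq_sr_r_r_of_isPiTriple hz h
    refine ⟨⟨i, rfl⟩, ⟨j, rfl⟩, ⟨k, ⟨isPiTriple_sr_r_r_iff.mp h, ?_⟩, rfl⟩⟩
    simpa [r_mul_r, one_def, -r_zero] using hz
  · rintro ⟨⟨i, rfl⟩, ⟨j, rfl⟩, ⟨k, ⟨hk, hk2⟩, rfl⟩⟩
    exact ⟨isPiTriple_sr_r_r_iff.mpr hk, by simpa [r_mul_r, one_def, -r_zero] using hk2⟩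

lemma ncard_annihilator_eq_of_ncard_piTriples_dihedral_eq [NeZero n] (hab : Even (a - b))
    (h : (piTriples (DihedralGroup n) a (-1) (-1) 1).ncard =
      (piTriples (DihedralGroup n) b (-1) (-1) 1).ncard) :
    {k : ZMod n | (a : ZMod n) * k = 0}.ncard = {k : ZMod n | (b : ZMod n) * k = 0}.ncard := by
  have hn : (Set.range (sr : ZMod n → DihedralGroup n)).ncard *
      (Set.range (r : ZMod n → DihedralGroup n)).ncard ≠ 0 := by
    rw [Set.ncard_range_of_injective (fun _ _ => sr.inj),
      Set.ncard_range_of_injective (fun _ _ => r.inj), Nat.card_zmod]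
    exact mul_ne_zero (NeZero.ne n) (NeZero.ne n)
  have hdiff := (Set.ncard_eq_ncard_iff_of_inter_eq (piTriples_inter_sq_eq_one _ hab)).mp h
  simp only [piTriples_dihedral_diff_sq_eq_one, Set.ncard_prod,
    Set.ncard_image_of_injective _ (fun _ _ => r.inj), ← mul_assoc] at hdiff
  refine (Set.ncard_eq_ncard_iff_of_inter_eq ?_).mpr (mul_left_cancel₀ hn hdiff)
  obtain ⟨t, ht⟩ := hab
  have hcast : (a : ZMod n) - b = t + t := by exact_mod_cast congrArg (Int.cast : ℤ → ZMod n) ht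
  ext k
  simp only [Set.mem_inter_iff, Set.mem_ofPred_eq]
  exact ⟨fun ⟨hk, h2⟩ => ⟨by linear_combination hk - k * hcast - t * h2, h2⟩,
    fun ⟨hk, h2⟩ => ⟨by linear_combination hk + k * hcast + t * h2, h2⟩⟩

end Dihedral

lemma dvd_of_ncard_annihilator_eq {a b : ℤ} (hb : b ≠ 0)
    (h : {k : ZMod b.natAbs | (a : ZMod b.natAbs) * k = 0}.ncard =
      {k : ZMod b.natAbs | (b : ZMod b.natAbs) * k = 0}.ncard) : b ∣ a := by
  have : NeZero b.natAbs := ⟨Int.natAbs_ne_zero.mpr hb⟩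
  have hb0 : (b : ZMod b.natAbs) = 0 :=
    (ZMod.intCast_zmod_eq_zero_iff_dvd b _).mpr (Int.natAbs_dvd.mpr dvd_rfl)
  have huniv : {k : ZMod b.natAbs | (a : ZMod b.natAbs) * k = 0} = Set.univ :=
    Set.eq_of_subset_of_ncard_le (Set.subset_univ _) (by simp [h, hb0])
  have ha0 : (a : ZMod b.natAbs) = 0 := by
    simpa using Set.ext_iff.mp huniv 1
  exact Int.natAbs_dvd.mp ((ZMod.intCast_zmod_eq_zero_iff_dvd a _).mp ha0)

lemma dvd_of_ncard_piTriples_eq {a b : ℤ} (hb : b ≠ 0)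
    (h : ∀ (G : Type) [Group G],
      (piTriples G a (-1) (-1) 1).ncard = (piTriples G b (-1) (-1) 1).ncard) :
    b ∣ a :=
  have : NeZero b.natAbs := ⟨Int.natAbs_ne_zero.mpr hb⟩
  dvd_of_ncard_annihilator_eq hb <| ncard_annihilator_eq_of_ncard_piTriples_dihedral_eq
    (even_sub_of_ncard_piTriples_eq (h _)) (h _)

/-- For nonzero integers `a`, `b`: `Π(a, −1, −1, 1) ≅ Π(b, −1, −1, 1)` iff `|a| = |b|`. -/
theorem PiGroup_infranil_iso_iff (a b : ℤ) (ha : a ≠ 0) (hb : b ≠ 0) :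
    Nonempty (PiGroup a (-1) (-1) 1 ≃* PiGroup b (-1) (-1) 1) ↔ |a| = |b| := by
  refine ⟨fun ⟨e⟩ => ?_, fun h => ?_⟩
  · have hcard := fun (G : Type) [Group G] => ncard_piTriples_eq_of_mulEquiv e G
    have hba := dvd_of_ncard_piTriples_eq hb hcard
    have hab := dvd_of_ncard_piTriples_eq ha fun G _ => (hcard G).symm
    exact Int.dvd_antisymm (abs_nonneg a) (abs_nonneg b) ((abs_dvd_abs a b).mpr hab)
      ((abs_dvd_abs b a).mpr hba)
  · rcases abs_eq_abs.mp h with rfl | hab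
    · exact ⟨.refl _⟩
    · exact ⟨piGroupMulEquivOfEqNeg (by omega)⟩
end

section
/- Let G be a group and let s_k, s_i, s_j, s_n ∈ G. Let ε_{ki}, ε_{kj}, ε_{ij}, ε_i, ε_j ∈ {1, −1} and a_{ki}, a_{kj} ∈ ℤ, and assume: s_k s_i s_k⁻¹ = s_n^{a_{ki}} s_i^{ε_{ki}}, s_k s_j s_k⁻¹ = s_n^{a_{kj}} s_j^{ε_{kj}}, s_i s_j s_i⁻¹ = s_j^{ε_{ij}}, s_i s_n s_i⁻¹ = s_n^{ε_i}, s_j s_n s_j⁻¹ = s_n^{ε_j}, and that s_n has infinite order. Then: if ε_{ij} = 1, (ε_j − 1)·a_{ki} = (ε_i − 1)·a_{kj}, and if ε_{ij} = −1, (ε_j − 1)·a_{ki} = (ε_i + ε_j)·a_{kj}. -/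
section
variable {G : Type*} [Group G]

private lemma conj_key {g x : G} {e : ℤ} (he : e = 1 ∨ e = -1)
    (h : g * x * g⁻¹ = x ^ e) (t : ℤ) :
    g * x ^ t * g⁻¹ = x ^ (e * t) ∧ g⁻¹ * x ^ t * g = x ^ (e * t) := by
  have hee : e * e = 1 := by rcases he with h' | h' <;> simp [h']
  have h1 : ∀ s : ℤ, g * x ^ s * g⁻¹ = x ^ (e * s) := by
    intro s
    rw [← conj_zpow, h, ← zpow_mul]
  refine ⟨h1 t, ?_⟩
  have := h1 (e * t)
  rw [← mul_assoc, hee, one_mul] at this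
  rw [← this]; group

private lemma conj_key' {g x : G} {e f : ℤ} (he : e = 1 ∨ e = -1)
    (hf : f = 1 ∨ f = -1) (h : g * x * g⁻¹ = x ^ e) (t : ℤ) :
    g ^ f * x ^ t * g ^ (-f) = x ^ (e * t) := by
  rcases hf with hf | hf <;> subst hf
  · simpa using (conj_key he h t).1
  · simpa using (conj_key he h t).2

end

/-- Lemma 4.2 of the paper: given `s_k s_i s_k⁻¹ = s_n^{a_{ki}} s_i^{ε_{ki}}`,
`s_k s_j s_k⁻¹ = s_n^{a_{kj}} s_j^{ε_{kj}}`, `s_i s_j s_i⁻¹ = s_j^{ε_{ij}}`,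
`s_i s_n s_i⁻¹ = s_n^{ε_i}`, `s_j s_n s_j⁻¹ = s_n^{ε_j}`, with all signs in `{1, −1}`
and `s_n` of infinite order, one has `(ε_j − 1)a_{ki} = (ε_i − 1)a_{kj}` if `ε_{ij} = 1`,
and `(ε_j − 1)a_{ki} = (ε_i + ε_j)a_{kj}` if `ε_{ij} = −1`. -/
theorem exponents_relation (G : Type*) [Group G] (sk si sj sn : G)
    (εki εkj εij εi εj aki akj : ℤ)
    (hεki : εki = 1 ∨ εki = -1) (hεkj : εkj = 1 ∨ εkj = -1)
    (hεij : εij = 1 ∨ εij = -1) (hεi : εi = 1 ∨ εi = -1) (hεj : εj = 1 ∨ εj = -1)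
    (h1 : sk * si * sk⁻¹ = sn ^ aki * si ^ εki)
    (h2 : sk * sj * sk⁻¹ = sn ^ akj * sj ^ εkj)
    (h3 : si * sj * si⁻¹ = sj ^ εij)
    (h4 : si * sn * si⁻¹ = sn ^ εi)
    (h5 : sj * sn * sj⁻¹ = sn ^ εj)
    (hsn : ¬ IsOfFinOrder sn) :
    (εij = 1 → (εj - 1) * aki = (εi - 1) * akj) ∧
    (εij = -1 → (εj - 1) * aki = (εi + εj) * akj) := by
  have hinj : Function.Injective fun n : ℤ => sn ^ n :=
    injective_zpow_iff_not_isOfFinOrder.mpr hsn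
  -- product of the two signs
  have hprod : εij * εkj = 1 ∨ εij * εkj = -1 := by
    rcases hεij with h' | h' <;> rcases hεkj with h'' | h'' <;> simp [h', h'']
  -- conjugation facts
  have c1 : si ^ εki * sn ^ akj * si ^ (-εki) = sn ^ (εi * akj) :=
    conj_key' hεi hεki h4 akj
  have c2 : si ^ εki * sj ^ εkj * si ^ (-εki) = sj ^ (εij * εkj) :=
    conj_key' hεij hεki h3 εkj
  have c3 : sj ^ (εij * εkj) * sn ^ (-aki) * sj ^ (-(εij * εkj)) = sn ^ (εj * -aki) :=
    conj_key' hεj hprod h5 (-aki)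
  -- two ways to compute sk * (si * sj * si⁻¹) * sk⁻¹
  have key : sn ^ (aki + εi * akj + εj * -aki) * sj ^ (εij * εkj)
      = (sn ^ akj * sj ^ εkj) ^ εij := by
    have lhs1 : (sk * si * sk⁻¹) * (sk * sj * sk⁻¹) * (sk * si * sk⁻¹)⁻¹
        = sk * (si * sj * si⁻¹) * sk⁻¹ := by group
    rw [h1, h2, h3, ← conj_zpow, h2] at lhs1
    -- lhs1 : (sn^aki * si^εki) * (sn^akj * sj^εkj) * (sn^aki * si^εki)⁻¹ = (sn^akj*sj^εkj)^εij
    rw [← lhs1]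
    have e1 : (sn ^ aki * si ^ εki) * (sn ^ akj * sj ^ εkj) * (sn ^ aki * si ^ εki)⁻¹
        = sn ^ aki * (si ^ εki * sn ^ akj * si ^ (-εki)) *
          (si ^ εki * sj ^ εkj * si ^ (-εki)) * sn ^ (-aki) := by group
    rw [e1, c1, c2]
    have e2 : sn ^ aki * sn ^ (εi * akj) * sj ^ (εij * εkj) * sn ^ (-aki)
        = sn ^ aki * sn ^ (εi * akj) *
          (sj ^ (εij * εkj) * sn ^ (-aki) * sj ^ (-(εij * εkj))) * sj ^ (εij * εkj) := by
      group
    rw [e2, c3, ← zpow_add, ← zpow_add]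
  constructor
  · intro h; subst h
    rw [zpow_one, one_mul] at key
    have := mul_right_cancel key
    have := hinj this
    linarith
  · intro h; subst h
    have hεkj' : -εkj = 1 ∨ -εkj = -1 := by rcases hεkj with h' | h' <;> simp [h']
    have hrhs : (sn ^ akj * sj ^ εkj) ^ (-1 : ℤ) = sn ^ (εj * -akj) * sj ^ (-εkj) := by
      have h6 := conj_key' hεj hεkj' h5 (-akj)
      rw [neg_neg] at h6
      rw [zpow_neg_one, mul_inv_rev, ← h6]; group
    rw [hrhs] at key
    have hk2 : sj ^ (-1 * εkj) = sj ^ (-εkj) := by ring_nf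
    rw [hk2] at key
    have := mul_right_cancel key
    have := hinj this
    linarith [this, mul_comm εi akj]
end
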